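/- arXiv:1904.06527 — 10 statements merged into one kernel-verified Lean document; each statement's English description precedes it below -/
import Mathlib

section
/- If a graph G of order n admits an R_g-cutset, then the number of edges of G is at most C(n,2) − (g+1)². -/
open SimpleGraph

/-- `S` is an `R_g`-cutset of `G`: removing `S` disconnects `G` and every
connected component of `G - S` has at least `g + 1` vertices. -/
def IsRgCutset {V : Type*} [Fintype V] [DecidableEq V] (G : SimpleGraph V) (g : ℕ)
    (S : Finset V) : Prop :=
  S.Nonempty ∧ ¬ (G.induce ((S : Set V)ᶜ)).Preconnected ∧
    ∀ c : (G.induce ((S : Set V)ᶜ)).ConnectedComponent, g + 1 ≤ Nat.card c.supp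

/-- The `g`-extra connectivity: minimum size of an `R_g`-cutset. -/
noncomputable def extraConn {V : Type*} [Fintype V] [DecidableEq V]
    (G : SimpleGraph V) (g : ℕ) : ℕ :=
  sInf {k | ∃ S : Finset V, S.card = k ∧ IsRgCutset G g S}

theorem rgCutset_edge_bound {V : Type*} [Fintype V] [DecidableEq V] (G : SimpleGraph V)
    (g : ℕ) (h : ∃ S, IsRgCutset G g S) :
    G.edgeSet.ncard ≤ Nat.choose (Fintype.card V) 2 - (g + 1) ^ 2 := by
  classical
  obtain ⟨S, _, hdisc, hcomp⟩ := h
  rw [SimpleGraph.Preconnected] at hdisc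
  push_neg at hdisc
  obtain ⟨a, b, hab⟩ := hdisc
  set H := G.induce ((S : Set V)ᶜ) with hH
  set ca := H.connectedComponentMk a with hca
  set cb := H.connectedComponentMk b with hcb
  have hne : ca ≠ cb := fun h => hab (SimpleGraph.ConnectedComponent.exact h)
  have hvalne : ∀ (x : ca.supp) (y : cb.supp), (x.1 : V) ≠ (y.1 : V) := by
    rintro ⟨x, hx⟩ ⟨y, hy⟩ hxy
    rw [SimpleGraph.ConnectedComponent.mem_supp_iff] at hx hy
    apply hne
    rw [← hx, ← hy]
    exact congrArg _ (Subtype.ext hxy)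
  have key : ∀ (x : ca.supp) (y : cb.supp), s((x.1 : V), (y.1 : V)) ∈ Gᶜ.edgeSet := by
    intro x y
    rw [SimpleGraph.mem_edgeSet, SimpleGraph.compl_adj]
    refine ⟨hvalne x y, fun hadj => ?_⟩
    have hx := x.2
    have hy := y.2
    rw [SimpleGraph.ConnectedComponent.mem_supp_iff] at hx hy
    have hHadj : H.Adj x.1 y.1 := hadj
    exact hne (by rw [← hx, ← hy, SimpleGraph.ConnectedComponent.eq]; exact hHadj.reachable)
  let f : ca.supp × cb.supp → Gᶜ.edgeSet := fun p => ⟨s((p.1.1 : V), (p.2.1 : V)), key p.1 p.2⟩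
  have hf : Function.Injective f := by
    rintro ⟨x, y⟩ ⟨x', y'⟩ hxy
    have : s((x.1 : V), (y.1 : V)) = s((x'.1 : V), (y'.1 : V)) := congrArg Subtype.val hxy
    rw [Sym2.eq_iff] at this
    rcases this with ⟨h1, h2⟩ | ⟨h1, h2⟩
    · have hx : x = x' := Subtype.ext (Subtype.ext h1)
      have hy : y = y' := Subtype.ext (Subtype.ext h2)
      rw [hx, hy]
    · exact absurd h1 (hvalne x y')
  have hcard : Nat.card (ca.supp × cb.supp) ≤ Nat.card Gᶜ.edgeSet :=
    Nat.card_le_card_of_injective f hf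
  rw [Nat.card_prod] at hcard
  have hge : (g + 1) ^ 2 ≤ Nat.card Gᶜ.edgeSet := by
    calc (g + 1) ^ 2 = (g + 1) * (g + 1) := sq (g + 1)
    _ ≤ Nat.card ca.supp * Nat.card cb.supp := Nat.mul_le_mul (hcomp ca) (hcomp cb)
    _ ≤ _ := hcard
  have hsum : G.edgeSet.ncard + Gᶜ.edgeSet.ncard = ((⊤ : SimpleGraph V).edgeSet).ncard := by
    rw [← Set.ncard_union_eq (SimpleGraph.disjoint_edgeSet.mpr disjoint_compl_right)
      (Set.toFinite _) (Set.toFinite _), ← SimpleGraph.edgeSet_sup, sup_compl_eq_top]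
  have htop : ((⊤ : SimpleGraph V).edgeSet).ncard = Nat.choose (Fintype.card V) 2 := by
    rw [← SimpleGraph.card_edgeFinset_top_eq_card_choose_two (V := V),
      Set.ncard_eq_toFinset_card']
    exact congrArg Finset.card (Set.toFinset_congr rfl)
  have h2 : Nat.card Gᶜ.edgeSet = Gᶜ.edgeSet.ncard := (Nat.card_coe_set_eq _)
  omega
end

section
/- For the complete bipartite graph K_{a,b} with a ≥ b ≥ 2, the g-extra connectivity exists only for g = 0, and κ_0(K_{a,b}) = b. -/
open SimpleGraph

lemma cbp_induce_bot_left {a b : ℕ} {A : Set (Fin a ⊕ Fin b)}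
    (h : ∀ v ∈ A, ∃ x, v = Sum.inl x) :
    (completeBipartiteGraph (Fin a) (Fin b)).induce A = ⊥ := by
  ext u v
  obtain ⟨x, hx⟩ := h u u.2
  obtain ⟨x', hx'⟩ := h v v.2
  simp [hx, hx']

lemma cbp_induce_bot_right {a b : ℕ} {A : Set (Fin a ⊕ Fin b)}
    (h : ∀ v ∈ A, ∃ y, v = Sum.inr y) :
    (completeBipartiteGraph (Fin a) (Fin b)).induce A = ⊥ := by
  ext u v
  obtain ⟨y, hy⟩ := h u u.2
  obtain ⟨y', hy'⟩ := h v v.2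
  simp [hy, hy']

lemma cbp_precon {a b : ℕ} {A : Set (Fin a ⊕ Fin b)} {x : Fin a} {y : Fin b}
    (hx : Sum.inl x ∈ A) (hy : Sum.inr y ∈ A) :
    ((completeBipartiteGraph (Fin a) (Fin b)).induce A).Preconnected := by
  have hub : ∀ w : A, ((completeBipartiteGraph (Fin a) (Fin b)).induce A).Reachable w
      ⟨Sum.inl x, hx⟩ := by
    rintro ⟨w, hw⟩
    cases w with
    | inl z =>
        have h1 : ((completeBipartiteGraph (Fin a) (Fin b)).induce A).Adj
            ⟨Sum.inl z, hw⟩ ⟨Sum.inr y, hy⟩ := by simp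
        have h2 : ((completeBipartiteGraph (Fin a) (Fin b)).induce A).Adj
            ⟨Sum.inr y, hy⟩ ⟨Sum.inl x, hx⟩ := by simp
        exact h1.reachable.trans h2.reachable
    | inr z =>
        have h2 : ((completeBipartiteGraph (Fin a) (Fin b)).induce A).Adj
            ⟨Sum.inr z, hw⟩ ⟨Sum.inl x, hx⟩ := by simp
        exact h2.reachable
  exact fun u v => (hub u).trans (hub v).symm

lemma cbp_cutset_side {a b : ℕ} {g : ℕ} {S : Finset (Fin a ⊕ Fin b)}
    (hS : IsRgCutset (completeBipartiteGraph (Fin a) (Fin b)) g S) :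
    (∀ x : Fin a, Sum.inl x ∈ S) ∨ (∀ y : Fin b, Sum.inr y ∈ S) := by
  by_contra h
  push_neg at h
  obtain ⟨⟨x, hx⟩, ⟨y, hy⟩⟩ := h
  exact hS.2.1 (cbp_precon (A := ((S : Set (Fin a ⊕ Fin b)))ᶜ) (by simpa using hx)
    (by simpa using hy))

lemma cbp_cutset_g_eq_zero {a b : ℕ} {g : ℕ} {S : Finset (Fin a ⊕ Fin b)}
    (hS : IsRgCutset (completeBipartiteGraph (Fin a) (Fin b)) g S) : g = 0 := by
  have hbot : (completeBipartiteGraph (Fin a) (Fin b)).induce ((S : Set (Fin a ⊕ Fin b))ᶜ) = ⊥ := by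
    rcases cbp_cutset_side hS with h | h
    · apply cbp_induce_bot_right
      rintro (x | y) hv
      · exact absurd (h x) (by simpa using hv)
      · exact ⟨y, rfl⟩
    · apply cbp_induce_bot_left
      rintro (x | y) hv
      · exact ⟨x, rfl⟩
      · exact absurd (h y) (by simpa using hv)
  obtain ⟨v, hv⟩ : Nonempty ((S : Set (Fin a ⊕ Fin b))ᶜ : Set _) := by
    by_contra hne
    rw [not_nonempty_iff] at hne
    exact hS.2.1 (fun u v => (hne.false u).elim)
  have hc := hS.2.2 ((completeBipartiteGraph (Fin a) (Fin b)).induce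
    ((S : Set (Fin a ⊕ Fin b))ᶜ) |>.connectedComponentMk ⟨v, hv⟩)
  have hsub : (ConnectedComponent.supp (((completeBipartiteGraph (Fin a) (Fin b)).induce
      ((S : Set (Fin a ⊕ Fin b))ᶜ)).connectedComponentMk ⟨v, hv⟩)).Subsingleton := by
    intro p hp q hq
    have : ((completeBipartiteGraph (Fin a) (Fin b)).induce
        ((S : Set (Fin a ⊕ Fin b))ᶜ)).Reachable p q := by
      rw [ConnectedComponent.mem_supp_iff] at hp hq
      exact (ConnectedComponent.exact (hp.trans hq.symm))
    rw [hbot] at this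
    exact reachable_bot.mp this
  have h1 : Nat.card (ConnectedComponent.supp (((completeBipartiteGraph (Fin a) (Fin b)).induce
      ((S : Set (Fin a ⊕ Fin b))ᶜ)).connectedComponentMk ⟨v, hv⟩)) ≤ 1 := by
    haveI : Subsingleton (ConnectedComponent.supp (((completeBipartiteGraph (Fin a) (Fin b)).induce
      ((S : Set (Fin a ⊕ Fin b))ᶜ)).connectedComponentMk ⟨v, hv⟩) : Set _) :=
      hsub.coe_sort
    exact le_of_eq (Nat.card_of_subsingleton ⟨⟨v, hv⟩, rfl⟩)
  omega

theorem extraConn_completeBipartite (a b : ℕ) (hb : 2 ≤ b) (hab : b ≤ a) :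
    (∀ g : ℕ, (∃ S, IsRgCutset (completeBipartiteGraph (Fin a) (Fin b)) g S) → g = 0) ∧
      extraConn (completeBipartiteGraph (Fin a) (Fin b)) 0 = b := by
  constructor
  · rintro g ⟨S, hS⟩
    exact cbp_cutset_g_eq_zero hS
  · set G := completeBipartiteGraph (Fin a) (Fin b)
    set T : Finset (Fin a ⊕ Fin b) := Finset.univ.image Sum.inr with hT
    have hTcard : T.card = b := by
      rw [hT, Finset.card_image_of_injective _ Sum.inr_injective]
      simp
    have hTcut : IsRgCutset G 0 T := by
      refine ⟨?_, ?_, ?_⟩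
      · rw [← Finset.card_pos, hTcard]; omega
      · intro hpre
        have h0 : (Sum.inl (⟨0, by omega⟩ : Fin a) : Fin a ⊕ Fin b) ∈ ((T : Set _)ᶜ) := by
          simp [hT]
        have h1 : (Sum.inl (⟨1, by omega⟩ : Fin a) : Fin a ⊕ Fin b) ∈ ((T : Set _)ᶜ) := by
          simp [hT]
        have hbot : G.induce ((T : Set (Fin a ⊕ Fin b))ᶜ) = ⊥ := by
          apply cbp_induce_bot_left
          rintro (x | y) hv
          · exact ⟨x, rfl⟩
          · exact absurd (by simp [hT] : Sum.inr y ∈ T) (by simpa using hv)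
        have := hpre ⟨_, h0⟩ ⟨_, h1⟩
        rw [hbot, reachable_bot] at this
        simp only [Subtype.mk.injEq, Sum.inl.injEq, Fin.mk.injEq] at this
        omega
      · intro c
        obtain ⟨w, hw⟩ := c.exists_rep
        have : w ∈ c.supp := hw
        have hne : Nonempty (c.supp : Set _) := ⟨⟨w, this⟩⟩
        have := Nat.card_pos (α := (c.supp : Set _))
        omega
    apply le_antisymm
    · exact Nat.sInf_le ⟨T, hTcard, hTcut⟩
    · have hne : {k | ∃ S : Finset (Fin a ⊕ Fin b), S.card = k ∧ IsRgCutset G 0 S}.Nonempty :=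
        ⟨b, T, hTcard, hTcut⟩
      obtain ⟨S, hScard, hScut⟩ := Nat.sInf_mem hne
      rw [extraConn, ← hScard]
      rcases cbp_cutset_side hScut with h | h
      · calc b ≤ a := hab
          _ = (Finset.univ.image (Sum.inl : Fin a → Fin a ⊕ Fin b)).card := by
              rw [Finset.card_image_of_injective _ Sum.inl_injective]; simp
          _ ≤ S.card := Finset.card_le_card (by
              intro v hv
              simp only [Finset.mem_image, Finset.mem_univ, true_and] at hv
              obtain ⟨x, rfl⟩ := hv
              exact h x)
      · calc b = (Finset.univ.image (Sum.inr : Fin b → Fin a ⊕ Fin b)).card := by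
              rw [Finset.card_image_of_injective _ Sum.inr_injective]; simp
          _ ≤ S.card := Finset.card_le_card (by
              intro v hv
              simp only [Finset.mem_image, Finset.mem_univ, true_and] at hv
              obtain ⟨y, rfl⟩ := hv
              exact h y)
end

section
/- Let G and H be connected graphs of orders n and m respectively, and let g satisfy 0 ≤ g ≤ min{⌊(n−3)/2⌋, ⌊(m−3)/2⌋}. Then κ_g(G∨H) = min{κ_g(G) + m, κ_g(H) + n}, where G∨H is the join of G and H. -/
open SimpleGraph

/-- The join `G ∨ H` of two graphs: disjoint union plus all edges in between. -/
def joinG {α β : Type*} (G : SimpleGraph α) (H : SimpleGraph β) : SimpleGraph (α ⊕ β) where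
  Adj x y := match x, y with
    | Sum.inl a, Sum.inl b => G.Adj a b
    | Sum.inr a, Sum.inr b => H.Adj a b
    | _, _ => True
  symm := by
    refine ⟨?_⟩
    rintro (a | a) (b | b) h
    · exact h.symm
    · trivial
    · trivial
    · exact h.symm
  loopless := by
    refine ⟨?_⟩
    rintro (a | a) h
    · exact G.irrefl h
    · exact H.irrefl h

/-! ### Auxiliary lemmas -/

lemma cutset_transfer {V W : Type*} [Fintype V] [DecidableEq V] [Fintype W] [DecidableEq W]
    {G : SimpleGraph V} {J : SimpleGraph W} {g : ℕ} {S : Finset V} {T : Finset W}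
    (e : (G.induce ((S : Set V)ᶜ)) ≃g (J.induce ((T : Set W)ᶜ)))
    (hS : ¬ (G.induce ((S : Set V)ᶜ)).Preconnected ∧
      ∀ c : (G.induce ((S : Set V)ᶜ)).ConnectedComponent, g + 1 ≤ Nat.card c.supp)
    (hT : T.Nonempty) : IsRgCutset J g T := by
  refine ⟨hT, fun h => hS.1 (e.preconnected_iff.mpr h), fun c => ?_⟩
  have h := hS.2 (e.connectedComponentEquiv.symm c)
  have h2 := Nat.card_congr (ConnectedComponent.isoEquivSupp e (e.connectedComponentEquiv.symm c))
  rw [Equiv.apply_symm_apply] at h2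
  omega

noncomputable def isoL {α β : Type*} (G : SimpleGraph α) (H : SimpleGraph β) (s : Set α) :
    G.induce s ≃g (joinG G H).induce (Sum.inl '' s) where
  toEquiv := Equiv.Set.image Sum.inl s Sum.inl_injective
  map_rel_iff' := Iff.rfl

noncomputable def isoR {α β : Type*} (G : SimpleGraph α) (H : SimpleGraph β) (s : Set β) :
    H.induce s ≃g (joinG G H).induce (Sum.inr '' s) where
  toEquiv := Equiv.Set.image Sum.inr s Sum.inr_injective
  map_rel_iff' := Iff.rfl

lemma compl_eq_left {α β : Type*} [Fintype α] [Fintype β] [DecidableEq α] [DecidableEq β]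
    (S : Finset α) :
    (((S.map ⟨Sum.inl, Sum.inl_injective⟩ ∪
        Finset.univ.map ⟨Sum.inr, Sum.inr_injective⟩ : Finset (α ⊕ β)) : Set (α ⊕ β)))ᶜ =
      Sum.inl '' ((S : Set α)ᶜ) := by
  ext (a | b) <;> simp

lemma compl_eq_right {α β : Type*} [Fintype α] [Fintype β] [DecidableEq α] [DecidableEq β]
    (S : Finset β) :
    (((S.map ⟨Sum.inr, Sum.inr_injective⟩ ∪
        Finset.univ.map ⟨Sum.inl, Sum.inl_injective⟩ : Finset (α ⊕ β)) : Set (α ⊕ β)))ᶜ =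
      Sum.inr '' ((S : Set β)ᶜ) := by
  ext (a | b) <;> simp

lemma card_left {α β : Type*} [Fintype α] [Fintype β] [DecidableEq α] [DecidableEq β]
    (S : Finset α) :
    (S.map ⟨Sum.inl, Sum.inl_injective⟩ ∪
        (Finset.univ.map ⟨Sum.inr, Sum.inr_injective⟩ : Finset (α ⊕ β))).card
      = S.card + Fintype.card β := by
  rw [Finset.card_union_of_disjoint, Finset.card_map, Finset.card_map, Finset.card_univ]
  simp [Finset.disjoint_left]

lemma card_right {α β : Type*} [Fintype α] [Fintype β] [DecidableEq α] [DecidableEq β]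
    (S : Finset β) :
    (S.map ⟨Sum.inr, Sum.inr_injective⟩ ∪
        (Finset.univ.map ⟨Sum.inl, Sum.inl_injective⟩ : Finset (α ⊕ β))).card
      = S.card + Fintype.card α := by
  rw [Finset.card_union_of_disjoint, Finset.card_map, Finset.card_map, Finset.card_univ]
  simp [Finset.disjoint_left]

lemma join_cutset_left {α β : Type*} [Fintype α] [Fintype β] [DecidableEq α] [DecidableEq β]
    {G : SimpleGraph α} {H : SimpleGraph β} {g : ℕ} {S : Finset α} [Nonempty β]
    (hS : IsRgCutset G g S) :
    IsRgCutset (joinG G H) g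
      (S.map ⟨Sum.inl, Sum.inl_injective⟩ ∪ Finset.univ.map ⟨Sum.inr, Sum.inr_injective⟩) := by
  refine cutset_transfer ?_ ⟨hS.2.1, hS.2.2⟩ ?_
  · rw [compl_eq_left]
    exact isoL G H _
  · exact Finset.Nonempty.mono Finset.subset_union_right
      (Finset.map_nonempty.mpr Finset.univ_nonempty)

lemma join_cutset_right {α β : Type*} [Fintype α] [Fintype β] [DecidableEq α] [DecidableEq β]
    {G : SimpleGraph α} {H : SimpleGraph β} {g : ℕ} {S : Finset β} [Nonempty α]
    (hS : IsRgCutset H g S) :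
    IsRgCutset (joinG G H) g
      (S.map ⟨Sum.inr, Sum.inr_injective⟩ ∪ Finset.univ.map ⟨Sum.inl, Sum.inl_injective⟩) := by
  refine cutset_transfer ?_ ⟨hS.2.1, hS.2.2⟩ ?_
  · rw [compl_eq_right]
    exact isoR G H _
  · exact Finset.Nonempty.mono Finset.subset_union_right
      (Finset.map_nonempty.mpr Finset.univ_nonempty)

lemma cutset_of_join_left {α β : Type*} [Fintype α] [Fintype β] [DecidableEq α] [DecidableEq β]
    {G : SimpleGraph α} {H : SimpleGraph β} {g : ℕ} (hG : G.Connected)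
    (T : Finset (α ⊕ β)) (hT : IsRgCutset (joinG G H) g T) (hb : ∀ b, Sum.inr b ∈ T) :
    IsRgCutset G g (Finset.univ.filter (fun a => Sum.inl a ∈ T)) ∧
      T.card = (Finset.univ.filter (fun a => Sum.inl a ∈ T)).card + Fintype.card β := by
  set S := Finset.univ.filter (fun a => Sum.inl a ∈ T) with hSdef
  have hTeq : T = S.map ⟨Sum.inl, Sum.inl_injective⟩ ∪
      Finset.univ.map ⟨Sum.inr, Sum.inr_injective⟩ := by
    ext (a | b) <;> simp [hSdef, hb]
  have e : G.induce ((S : Set α))ᶜ ≃g (joinG G H).induce ((T : Set (α ⊕ β)))ᶜ := by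
    rw [hTeq, compl_eq_left]
    exact isoL G H _
  have hSne : S.Nonempty := by
    by_contra h
    rw [Finset.not_nonempty_iff_eq_empty] at h
    apply hT.2.1
    apply e.preconnected_iff.mp
    have hs : ((S : Set α))ᶜ = Set.univ := by simp [h]
    rw [hs]
    exact (induceUnivIso G).preconnected_iff.mpr hG.preconnected
  exact ⟨cutset_transfer e.symm ⟨hT.2.1, hT.2.2⟩ hSne, by rw [hTeq]; exact card_left S⟩

lemma cutset_of_join_right {α β : Type*} [Fintype α] [Fintype β] [DecidableEq α] [DecidableEq β]
    {G : SimpleGraph α} {H : SimpleGraph β} {g : ℕ} (hH : H.Connected)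
    (T : Finset (α ⊕ β)) (hT : IsRgCutset (joinG G H) g T) (ha : ∀ a, Sum.inl a ∈ T) :
    IsRgCutset H g (Finset.univ.filter (fun b => Sum.inr b ∈ T)) ∧
      T.card = (Finset.univ.filter (fun b => Sum.inr b ∈ T)).card + Fintype.card α := by
  set S := Finset.univ.filter (fun b => Sum.inr b ∈ T) with hSdef
  have hTeq : T = S.map ⟨Sum.inr, Sum.inr_injective⟩ ∪
      Finset.univ.map ⟨Sum.inl, Sum.inl_injective⟩ := by
    ext (a | b) <;> simp [hSdef, ha]
  have e : H.induce ((S : Set β))ᶜ ≃g (joinG G H).induce ((T : Set (α ⊕ β)))ᶜ := by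
    rw [hTeq, compl_eq_right]
    exact isoR G H _
  have hSne : S.Nonempty := by
    by_contra h
    rw [Finset.not_nonempty_iff_eq_empty] at h
    apply hT.2.1
    apply e.preconnected_iff.mp
    have hs : ((S : Set β))ᶜ = Set.univ := by simp [h]
    rw [hs]
    exact (induceUnivIso H).preconnected_iff.mpr hH.preconnected
  exact ⟨cutset_transfer e.symm ⟨hT.2.1, hT.2.2⟩ hSne, by rw [hTeq]; exact card_right S⟩

lemma join_preconn {α β : Type*} [Fintype α] [Fintype β] [DecidableEq α] [DecidableEq β]
    {G : SimpleGraph α} {H : SimpleGraph β} {T : Finset (α ⊕ β)} {a : α} {b : β}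
    (ha : Sum.inl a ∉ T) (hb : Sum.inr b ∉ T) :
    ((joinG G H).induce ((T : Set (α ⊕ β)))ᶜ).Preconnected := by
  have ha' : (Sum.inl a : α ⊕ β) ∈ ((T : Set (α ⊕ β)))ᶜ := by simpa using ha
  have hb' : (Sum.inr b : α ⊕ β) ∈ ((T : Set (α ⊕ β)))ᶜ := by simpa using hb
  have key : ∀ z : ↥(((T : Set (α ⊕ β)))ᶜ),
      ((joinG G H).induce ((T : Set (α ⊕ β)))ᶜ).Reachable z ⟨Sum.inr b, hb'⟩ := by
    rintro ⟨(a' | b'), hz⟩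
    · exact Adj.reachable (by trivial)
    · exact (Adj.reachable (v := (⟨Sum.inl a, ha'⟩ : ↥(((T : Set (α ⊕ β)))ᶜ))) (by trivial)).trans
        (Adj.reachable (by trivial))
  intro x y
  exact (key x).trans (key y).symm

theorem extraConn_join {α β : Type*} [Fintype α] [Fintype β] [DecidableEq α] [DecidableEq β]
    (G : SimpleGraph α) (H : SimpleGraph β) (n m g : ℕ)
    (hn : Fintype.card α = n) (hm : Fintype.card β = m)
    (hG : G.Connected) (hH : H.Connected)
    (hg : g ≤ min ((n - 3) / 2) ((m - 3) / 2))
    (hEG : ∃ S, IsRgCutset G g S) (hEH : ∃ S, IsRgCutset H g S) :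
    extraConn (joinG G H) g = min (extraConn G g + m) (extraConn H g + n) := by
  subst hn hm
  obtain ⟨SG0, hSG0⟩ := hEG
  obtain ⟨SH0, hSH0⟩ := hEH
  have hna : Nonempty α := ⟨hSG0.1.choose⟩
  have hnb : Nonempty β := ⟨hSH0.1.choose⟩
  have hGne : {k | ∃ S : Finset α, S.card = k ∧ IsRgCutset G g S}.Nonempty :=
    ⟨SG0.card, SG0, rfl, hSG0⟩
  have hHne : {k | ∃ S : Finset β, S.card = k ∧ IsRgCutset H g S}.Nonempty :=
    ⟨SH0.card, SH0, rfl, hSH0⟩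
  obtain ⟨Sg, hSgc, hSgcut⟩ := Nat.sInf_mem hGne
  obtain ⟨Sh, hShc, hShcut⟩ := Nat.sInf_mem hHne
  have hub1 : extraConn (joinG G H) g ≤ extraConn G g + Fintype.card β := by
    apply Nat.sInf_le
    exact ⟨_, by rw [card_left, hSgc]; rfl, join_cutset_left hSgcut⟩
  have hub2 : extraConn (joinG G H) g ≤ extraConn H g + Fintype.card α := by
    apply Nat.sInf_le
    exact ⟨_, by rw [card_right, hShc]; rfl, join_cutset_right hShcut⟩
  have hAne : {k | ∃ T : Finset (α ⊕ β), T.card = k ∧ IsRgCutset (joinG G H) g T}.Nonempty :=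
    ⟨_, _, rfl, join_cutset_left (H := H) hSgcut⟩
  obtain ⟨T, hTc, hTcut⟩ := Nat.sInf_mem hAne
  refine le_antisymm (le_min hub1 hub2) ?_
  by_cases hb : ∀ b, Sum.inr b ∈ T
  · obtain ⟨hScut, hcard⟩ := cutset_of_join_left hG T hTcut hb
    have h1 : extraConn G g ≤ (Finset.univ.filter (fun a => Sum.inl a ∈ T)).card :=
      Nat.sInf_le ⟨_, rfl, hScut⟩
    refine le_trans (min_le_left _ _) ?_
    have : T.card = extraConn (joinG G H) g := hTc
    omega
  · by_cases ha : ∀ a, Sum.inl a ∈ T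
    · obtain ⟨hScut, hcard⟩ := cutset_of_join_right hH T hTcut ha
      have h1 : extraConn H g ≤ (Finset.univ.filter (fun b => Sum.inr b ∈ T)).card :=
        Nat.sInf_le ⟨_, rfl, hScut⟩
      refine le_trans (min_le_right _ _) ?_
      have : T.card = extraConn (joinG G H) g := hTc
      omega
    · push_neg at ha hb
      obtain ⟨a, hA⟩ := ha
      obtain ⟨b, hB⟩ := hb
      exact absurd (join_preconn (G := G) (H := H) hA hB) hTcut.2.1
end

section
/- Let G and H be connected graphs of orders n and m respectively. If g > max{⌊(n−3)/2⌋, ⌊(m−3)/2⌋}, then the join G∨H admits no R_g-cutset. -/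
open SimpleGraph

lemma side_case {V γ : Type*} [Fintype V] [DecidableEq V] [Fintype γ]
    (K : SimpleGraph V) (G : SimpleGraph γ) (f : γ → V) (hf : Function.Injective f)
    (hadj : ∀ a b, K.Adj (f a) (f b) ↔ G.Adj a b)
    (hG : G.Connected) (g : ℕ) (hcard : Fintype.card γ ≤ 2 * g + 2)
    (S : Finset V) (hT : ∀ v : V, v ∉ S → ∃ a, v = f a)
    (hRg : IsRgCutset K g S) : False := by
  obtain ⟨hne, hnpc, hsupp⟩ := hRg
  have hNe : Nonempty γ := hG.nonempty
  by_cases hall : ∀ a, f a ∉ S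
  · apply hnpc
    intro u v
    obtain ⟨a, ha⟩ := hT u.1 u.2
    obtain ⟨b, hb⟩ := hT v.1 v.2
    let hom : G →g K.induce ((S : Set V)ᶜ) :=
      ⟨fun x => ⟨f x, by simp [hall x]⟩, by
        intro x y hxy
        simpa [hadj] using (hadj x y).2 hxy⟩
    have hr := (hG.preconnected a b).map hom
    have hu : u = hom a := Subtype.ext ha
    have hv : v = hom b := Subtype.ext hb
    rw [hu, hv]; exact hr
  · push_neg at hall
    obtain ⟨a₀, ha₀⟩ := hall
    rw [Preconnected] at hnpc
    push_neg at hnpc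
    obtain ⟨u, v, huv⟩ := hnpc
    set K' := K.induce ((S : Set V)ᶜ) with hK'
    let c₁ := K'.connectedComponentMk u
    let c₂ := K'.connectedComponentMk v
    have hc12 : c₁ ≠ c₂ := fun h => huv (ConnectedComponent.exact h)
    have hfr : ∀ w : V, w ∉ S → f (Function.invFun f w) = w := by
      intro w hw
      obtain ⟨a, rfl⟩ := hT w hw
      rw [Function.leftInverse_invFun hf a]
    -- injection
    let r : V → γ := Function.invFun f
    have hmem : ∀ (c : K'.ConnectedComponent) (x : ↥c.supp), (x.1.1 : V) ∉ S :=
      fun c x => x.1.2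
    let ψ : (↥c₁.supp ⊕ ↥c₂.supp) ⊕ PUnit.{1} → γ :=
      Sum.elim (Sum.elim (fun x => r x.1.1) (fun x => r x.1.1)) (fun _ => a₀)
    have hval : ∀ (c : K'.ConnectedComponent) (x : ↥c.supp), f (r x.1.1) = x.1.1 :=
      fun c x => hfr _ (hmem c x)
    have hne' : ∀ (c : K'.ConnectedComponent) (x : ↥c.supp), r x.1.1 ≠ a₀ := by
      intro c x h
      apply hmem c x
      rw [← hval c x, h]; exact ha₀
    have hcomp : ∀ (c : K'.ConnectedComponent) (x : ↥c.supp),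
        K'.connectedComponentMk x.1 = c := fun c x => x.2
    have hsame : ∀ (c : K'.ConnectedComponent) (x y : ↥c.supp), r x.1.1 = r y.1.1 → x = y := by
      intro c x y h
      exact Subtype.ext (Subtype.ext (by rw [← hval c x, ← hval c y, h]))
    have hdiff : ∀ (c c' : K'.ConnectedComponent) (x : ↥c.supp) (y : ↥c'.supp),
        r x.1.1 = r y.1.1 → c = c' := by
      intro c c' x y h
      have hxy : x.1 = y.1 := Subtype.ext (by rw [← hval c x, ← hval c' y, h])
      rw [← hcomp c x, ← hcomp c' y, hxy]
    have hinj : Function.Injective ψ := by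
      rintro ((x | x) | x) ((y | y) | y) h <;>
        simp only [ψ, Sum.elim_inl, Sum.elim_inr] at h
      · exact congrArg _ (congrArg _ (hsame c₁ x y h))
      · exact absurd (hdiff c₁ c₂ x y h) hc12
      · exact absurd h (hne' c₁ x)
      · exact absurd (hdiff c₂ c₁ x y h) (Ne.symm hc12)
      · exact congrArg _ (congrArg _ (hsame c₂ x y h))
      · exact absurd h (hne' c₂ x)
      · exact absurd h.symm (hne' c₁ y)
      · exact absurd h.symm (hne' c₂ y)
      · exact congrArg Sum.inr (Subsingleton.elim x y)
    have hle := Nat.card_le_card_of_injective ψ hinj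
    rw [Nat.card_sum, Nat.card_sum, Nat.card_eq_fintype_card (α := γ)] at hle
    have h1 := hsupp c₁
    have h2 := hsupp c₂
    have : Nat.card PUnit.{1} = 1 := Nat.card_eq_one_iff_unique.mpr ⟨inferInstance, inferInstance⟩
    omega

theorem join_no_cutset {α β : Type*} [Fintype α] [Fintype β] [DecidableEq α] [DecidableEq β]
    (G : SimpleGraph α) (H : SimpleGraph β) (n m g : ℕ)
    (hn : Fintype.card α = n) (hm : Fintype.card β = m)
    (hG : G.Connected) (hH : H.Connected)
    (hg : max ((n - 3) / 2) ((m - 3) / 2) < g) :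
    ¬ ∃ S, IsRgCutset (joinG G H) g S := by
  rintro ⟨S, hS⟩
  have hgn : (n - 3) / 2 < g := lt_of_le_of_lt (le_max_left _ _) hg
  have hgm : (m - 3) / 2 < g := lt_of_le_of_lt (le_max_right _ _) hg
  have hn2 : n ≤ 2 * g + 2 := by omega
  have hm2 : m ≤ 2 * g + 2 := by omega
  by_cases h1 : ∀ b, Sum.inr b ∈ S
  · exact side_case (joinG G H) G Sum.inl Sum.inl_injective (fun a b => Iff.rfl) hG g
      (by rw [hn]; omega) S
      (fun v hv => by
        cases v with
        | inl a => exact ⟨a, rfl⟩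
        | inr b => exact absurd (h1 b) hv) hS
  by_cases h2 : ∀ a, Sum.inl a ∈ S
  · exact side_case (joinG G H) H Sum.inr Sum.inr_injective (fun a b => Iff.rfl) hH g
      (by rw [hm]; omega) S
      (fun v hv => by
        cases v with
        | inl a => exact absurd (h2 a) hv
        | inr b => exact ⟨b, rfl⟩) hS
  push_neg at h1 h2
  obtain ⟨b, hb⟩ := h1
  obtain ⟨a, ha⟩ := h2
  have hb' : Sum.inr b ∈ ((S : Set (α ⊕ β))ᶜ) := by simp [hb]
  have ha' : Sum.inl a ∈ ((S : Set (α ⊕ β))ᶜ) := by simp [ha]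
  apply hS.2.1
  have key : ∀ u : ↥((S : Set (α ⊕ β))ᶜ),
      ((joinG G H).induce ((S : Set (α ⊕ β))ᶜ)).Reachable u ⟨Sum.inr b, hb'⟩ := by
    rintro ⟨(x | x), hx⟩
    · exact Adj.reachable (by simp [joinG])
    · exact (Adj.reachable (v := (⟨Sum.inl a, ha'⟩ : ↥((S : Set (α ⊕ β))ᶜ)))
        (by simp [joinG])).trans (Adj.reachable (by simp [joinG]))
  exact fun u v => (key u).trans (key v).symm
end

section
/- Let G be a connected graph of order n ≥ 2 and H a connected graph of order m. If 0 ≤ g ≤ m−1, then the g-extra connectivity of the corona G∗H equals 1. -/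
open SimpleGraph

/-- The corona `G ∗ H`: one copy of `G`, and for each vertex `u` of `G` a copy of `H`
whose vertices are all joined to `u`. -/
def corona {α β : Type*} (G : SimpleGraph α) (H : SimpleGraph β) :
    SimpleGraph (α ⊕ α × β) where
  Adj x y := match x, y with
    | Sum.inl u, Sum.inl v => G.Adj u v
    | Sum.inl u, Sum.inr (v, _) => u = v
    | Sum.inr (v, _), Sum.inl u => v = u
    | Sum.inr (u, x), Sum.inr (v, y) => u = v ∧ H.Adj x y
  symm := by
    constructor
    rintro (u | ⟨u, x⟩) (v | ⟨v, y⟩) h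
    · exact h.symm
    · exact h.symm
    · exact h.symm
    · exact ⟨h.1.symm, h.2.symm⟩
  loopless := by
    constructor
    rintro (u | ⟨u, x⟩) h
    · exact G.irrefl h
    · exact H.irrefl h.2

theorem extraConn_corona_small_g {α β : Type*} [Fintype α] [Fintype β]
    [DecidableEq α] [DecidableEq β]
    (G : SimpleGraph α) (H : SimpleGraph β) (m g : ℕ)
    (hα : 2 ≤ Fintype.card α) (hm : Fintype.card β = m)
    (hG : G.Connected) (hH : H.Connected)
    (hg : g ≤ m - 1) :
    extraConn (corona G H) g = 1 := by
  obtain ⟨u, v, huv⟩ := Fintype.exists_pair_of_one_lt_card (by omega : 1 < Fintype.card α)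
  have hβ : Nonempty β := by cases hH with | mk pre => exact ‹Nonempty β›
  obtain ⟨b₀⟩ := hβ
  have hm1 : 1 ≤ m := by rw [← hm]; exact Fintype.card_pos_iff.mpr ⟨b₀⟩
  have hgm : g + 1 ≤ m := by omega
  set S : Finset (α ⊕ α × β) := {Sum.inl u} with hSdef
  have hmemT : ∀ x : α ⊕ α × β, x ∈ ((S : Set (α ⊕ α × β))ᶜ) ↔ x ≠ Sum.inl u := by
    intro x; simp [hSdef]
  set K := (corona G H).induce ((S : Set (α ⊕ α × β))ᶜ) with hK
  have hinr : ∀ (w : α) (b : β), Sum.inr (w, b) ∈ ((S : Set (α ⊕ α × β))ᶜ) := by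
    intro w b; rw [hmemT]; simp
  have hinl : ∀ w : α, w ≠ u → Sum.inl w ∈ ((S : Set (α ⊕ α × β))ᶜ) := by
    intro w hw; rw [hmemT]; simp [hw]
  -- adjacency closure: neighbors of copy-u vertices are copy-u vertices
  have hclosed : ∀ {x y : ((S : Set (α ⊕ α × β))ᶜ : Set (α ⊕ α × β))}, K.Adj x y →
      (∃ b, (x : α ⊕ α × β) = Sum.inr (u, b)) →
      ∃ b, (y : α ⊕ α × β) = Sum.inr (u, b) := by
    rintro ⟨x, hx⟩ ⟨y, hy⟩ hadj ⟨b, hb⟩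
    simp only at hb; subst hb
    have hadj' : (corona G H).Adj (Sum.inr (u, b)) y := hadj
    match y with
    | Sum.inl w =>
      exfalso
      have : u = w := hadj'
      rw [hmemT] at hy
      exact hy (by rw [this])
    | Sum.inr (w, c) =>
      obtain ⟨h1, _⟩ := hadj'
      exact ⟨c, by rw [h1]⟩
  have hreachP : ∀ {x y : ((S : Set (α ⊕ α × β))ᶜ : Set (α ⊕ α × β))}, K.Reachable x y →
      (∃ b, (x : α ⊕ α × β) = Sum.inr (u, b)) →
      ∃ b, (y : α ⊕ α × β) = Sum.inr (u, b) := by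
    intro x y h hx
    obtain ⟨p⟩ := h
    induction p with
    | nil => exact hx
    | cons h p ih => exact ih (hclosed h hx)
  -- reachability within the copy of H at u
  have hrH : ∀ b b' : β, K.Reachable ⟨Sum.inr (u, b), hinr u b⟩ ⟨Sum.inr (u, b'), hinr u b'⟩ := by
    intro b b'
    obtain ⟨p⟩ := hH.preconnected b b'
    induction p with
    | nil => exact Reachable.refl _
    | @cons c d e h p ih =>
      refine Reachable.trans ?_ ih
      exact Adj.reachable (by exact ⟨rfl, h⟩ : (corona G H).Adj (Sum.inr (u, c)) (Sum.inr (u, d)))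
  -- every vertex is reachable from a full copy of H
  have hcopy : ∀ x : ((S : Set (α ⊕ α × β))ᶜ : Set (α ⊕ α × β)), ∃ w : α,
      ∀ b : β, K.Reachable ⟨Sum.inr (w, b), hinr w b⟩ x := by
    rintro ⟨x, hx⟩
    match x with
    | Sum.inl w =>
      refine ⟨w, fun b => ?_⟩
      exact Adj.reachable (by exact rfl : (corona G H).Adj (Sum.inr (w, b)) (Sum.inl w))
    | Sum.inr (w, b) =>
      by_cases hwu : w = u
      · subst hwu
        exact ⟨w, fun b' => hrH b' b⟩
      · refine ⟨w, fun b' => ?_⟩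
        refine Reachable.trans (v := ⟨Sum.inl w, hinl w hwu⟩) ?_ ?_
        · exact Adj.reachable (by exact rfl : (corona G H).Adj (Sum.inr (w, b')) (Sum.inl w))
        · exact Adj.reachable (by exact rfl : (corona G H).Adj (Sum.inl w) (Sum.inr (w, b)))
  -- the cutset property
  have hcut : IsRgCutset (corona G H) g S := by
    refine ⟨⟨Sum.inl u, by simp [hSdef]⟩, ?_, ?_⟩
    · intro hpre
      have hr := hpre ⟨Sum.inr (u, b₀), hinr u b₀⟩ ⟨Sum.inl v, hinl v (Ne.symm huv)⟩
      obtain ⟨b, hb⟩ := hreachP hr ⟨b₀, rfl⟩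
      exact absurd hb (by simp)
    · intro c
      refine le_trans hgm ?_
      obtain ⟨x, hxc⟩ := c.exists_rep
      obtain ⟨w, hw⟩ := hcopy x
      have hf : Function.Injective (fun b : β =>
          (⟨⟨Sum.inr (w, b), hinr w b⟩, by
            rw [ConnectedComponent.mem_supp_iff, ← hxc]
            exact ConnectedComponent.sound (hw b)⟩ : c.supp)) := by
        intro b b' hbb'
        simpa using congrArg (fun z : c.supp => (z : ((S : Set (α ⊕ α × β))ᶜ : Set (α ⊕ α × β))).val) hbb'
      calc m = Nat.card β := by rw [Nat.card_eq_fintype_card, hm]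
        _ ≤ Nat.card c.supp := Nat.card_le_card_of_injective _ hf
  -- compute the infimum
  have hmem : 1 ∈ {k | ∃ T : Finset (α ⊕ α × β), T.card = k ∧ IsRgCutset (corona G H) g T} :=
    ⟨S, by simp [hSdef], hcut⟩
  refine le_antisymm (Nat.sInf_le hmem) ?_
  obtain ⟨T, hTcard, hT⟩ := Nat.sInf_mem (⟨1, hmem⟩ : Set.Nonempty _)
  rw [extraConn, ← hTcard]
  exact Finset.card_pos.mpr hT.1
end

section
/- Let G be a connected graph of order n ≥ 2, H a connected graph of order m, and suppose k(m+1) < g+1 ≤ (k+1)(m+1) for some integer k with 1 ≤ k ≤ ⌊(n−3)/2⌋. Then κ_g(G∗H) = |X|(m+1), where X is a minimum-size subset of V(G) such that G−X is disconnected and every component of G−X has at least k+1 vertices (i.e., |X| = κ_k(G)). -/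
open SimpleGraph

private lemma reach_proj {V W : Type*} {G1 : SimpleGraph V} {G2 : SimpleGraph W} (f : V → W)
    (hf : ∀ a b, G1.Adj a b → f a = f b ∨ G2.Adj (f a) (f b))
    {a b : V} (h : G1.Reachable a b) : G2.Reachable (f a) (f b) := by
  obtain ⟨w⟩ := h
  induction w with
  | nil => exact Reachable.refl _
  | cons hadj p ih =>
    rcases hf _ _ hadj with he | ha
    · rw [he]; exact ih
    · exact ha.reachable.trans ih

private lemma sum_elim_inj {α β : Type*} {z w : α ⊕ α × β}
    (h1 : Sum.elim id Prod.fst z = Sum.elim id Prod.fst w)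
    (h2 : Sum.elim (fun _ => (none : Option β)) (fun ub => some ub.2) z
        = Sum.elim (fun _ => none) (fun ub => some ub.2) w) : z = w := by
  rcases z with u | ⟨u, b⟩ <;> rcases w with v | ⟨v, c⟩ <;> simp_all

private lemma option_elim_inj {α β : Type*} {v w : α} {t s : Option β}
    (h : t.elim (Sum.inl v : α ⊕ α × β) (fun b => Sum.inr (v, b))
       = s.elim (Sum.inl w) (fun b => Sum.inr (w, b))) : v = w ∧ t = s := by
  rcases t with _ | b <;> rcases s with _ | c <;> simp_all

section aux
variable {α β : Type*} (G : SimpleGraph α) (H : SimpleGraph β)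
  (S : Finset (α ⊕ α × β)) (D : Finset α)
  (hSD : ∀ u, Sum.inl u ∈ S ↔ u ∈ D)
  (hfull : ∀ u b, u ∈ D → Sum.inr (u, b) ∈ S)

include hSD hfull

private def cProj (x : ((S : Set (α ⊕ α × β))ᶜ : Set _)) : ((D : Set α)ᶜ : Set α) :=
  ⟨Sum.elim id Prod.fst x.1, by
    obtain ⟨z, hz⟩ := x
    have hz' : z ∉ S := hz
    intro hmem
    rcases z with u | ⟨u, b⟩
    · exact hz' ((hSD u).2 hmem)
    · exact hz' (hfull u b hmem)⟩

private def cLift (u : ((D : Set α)ᶜ : Set α)) : ((S : Set (α ⊕ α × β))ᶜ : Set _) :=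
  ⟨Sum.inl u.1, fun h => u.2 ((hSD u.1).1 h)⟩

private lemma cProj_adj {x y : ((S : Set (α ⊕ α × β))ᶜ : Set _)}
    (hxy : ((corona G H).induce ((S : Set (α ⊕ α × β))ᶜ)).Adj x y) :
    cProj S D hSD hfull x = cProj S D hSD hfull y ∨
      (G.induce ((D : Set α)ᶜ)).Adj (cProj S D hSD hfull x) (cProj S D hSD hfull y) := by
  obtain ⟨(u | ⟨u, b⟩), hx⟩ := x <;> obtain ⟨(v | ⟨v, c⟩), hy⟩ := y
  · exact Or.inr hxy
  · exact Or.inl (Subtype.ext hxy)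
  · exact Or.inl (Subtype.ext hxy)
  · exact Or.inl (Subtype.ext hxy.1)

omit hfull in
private lemma cLift_adj {u v : ((D : Set α)ᶜ : Set α)}
    (huv : (G.induce ((D : Set α)ᶜ)).Adj u v) :
    ((corona G H).induce ((S : Set (α ⊕ α × β))ᶜ)).Adj (cLift S D hSD u) (cLift S D hSD v) := huv

private lemma cProj_cLift (u : ((D : Set α)ᶜ : Set α)) :
    cProj S D hSD hfull (cLift S D hSD u) = u := rfl

private lemma cStep (x : ((S : Set (α ⊕ α × β))ᶜ : Set _)) :
    ((corona G H).induce ((S : Set (α ⊕ α × β))ᶜ)).Reachable x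
      (cLift S D hSD (cProj S D hSD hfull x)) := by
  obtain ⟨(u | ⟨u, b⟩), hx⟩ := x
  · exact Reachable.refl _
  · exact Adj.reachable (show (corona G H).Adj (Sum.inr (u, b)) (Sum.inl u) from rfl)

private lemma cProj_reach {x y : ((S : Set (α ⊕ α × β))ᶜ : Set _)}
    (h : ((corona G H).induce ((S : Set (α ⊕ α × β))ᶜ)).Reachable x y) :
    (G.induce ((D : Set α)ᶜ)).Reachable (cProj S D hSD hfull x) (cProj S D hSD hfull y) :=
  reach_proj _ (fun _ _ hab => cProj_adj G H S D hSD hfull hab) h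

omit hfull in
private lemma cLift_reach {u v : ((D : Set α)ᶜ : Set α)}
    (h : (G.induce ((D : Set α)ᶜ)).Reachable u v) :
    ((corona G H).induce ((S : Set (α ⊕ α × β))ᶜ)).Reachable (cLift S D hSD u) (cLift S D hSD v) :=
  reach_proj _ (fun _ _ hab => Or.inr (cLift_adj G H S D hSD hab)) h

private lemma cPre_iff :
    ((corona G H).induce ((S : Set (α ⊕ α × β))ᶜ)).Preconnected ↔
      (G.induce ((D : Set α)ᶜ)).Preconnected := by
  constructor
  · intro h u v
    have := cProj_reach G H S D hSD hfull (h (cLift S D hSD u) (cLift S D hSD v))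
    simpa [cProj_cLift] using this
  · intro h x y
    exact (cStep G H S D hSD hfull x).trans
      ((cLift_reach G H S D hSD (h _ _)).trans (cStep G H S D hSD hfull y).symm)

private lemma cCard_down [Fintype α] [Fintype β] (u : ((D : Set α)ᶜ : Set α)) :
    Nat.card ((((corona G H).induce ((S : Set (α ⊕ α × β))ᶜ)).connectedComponentMk
        (cLift S D hSD u)).supp)
      ≤ Nat.card (((G.induce ((D : Set α)ᶜ)).connectedComponentMk u).supp) *
        (Fintype.card β + 1) := by
  classical
  set Γ := (corona G H).induce ((S : Set (α ⊕ α × β))ᶜ) with hΓ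
  set c := Γ.connectedComponentMk (cLift S D hSD u) with hc
  set c' := (G.induce ((D : Set α)ᶜ)).connectedComponentMk u with hc'
  have hmem : ∀ x : ↥c.supp, cProj S D hSD hfull x.1 ∈ c'.supp := by
    intro x
    have hx : Γ.connectedComponentMk x.1 = Γ.connectedComponentMk (cLift S D hSD u) := x.2
    have hr := cProj_reach G H S D hSD hfull (ConnectedComponent.eq.mp hx)
    rw [cProj_cLift] at hr
    exact (ConnectedComponent.mem_supp_iff _ _).2 (ConnectedComponent.eq.mpr hr)
  let tag : α ⊕ α × β → Option β := Sum.elim (fun _ => none) (fun ub => some ub.2)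
  let F : ↥c.supp → ↥c'.supp × Option β := fun x => (⟨_, hmem x⟩, tag x.1.1)
  have hFinj : Function.Injective F := by
    intro x y hxy
    have h1 : Sum.elim id Prod.fst x.1.1 = Sum.elim id Prod.fst y.1.1 :=
      congrArg (fun t => t.1.1.1) hxy
    have h2 : tag x.1.1 = tag y.1.1 := congrArg Prod.snd hxy
    exact Subtype.ext (Subtype.ext (sum_elim_inj h1 h2))
  have hle := Nat.card_le_card_of_injective F hFinj
  rw [Nat.card_prod, Finite.card_option, Nat.card_eq_fintype_card (α := β)] at hle
  exact hle

private lemma cCard_up [Fintype α] [Fintype β]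
    (hS2 : ∀ u b, Sum.inr (u, b) ∈ S → u ∈ D) (u : ((D : Set α)ᶜ : Set α)) :
    Nat.card (((G.induce ((D : Set α)ᶜ)).connectedComponentMk u).supp) *
        (Fintype.card β + 1)
      ≤ Nat.card ((((corona G H).induce ((S : Set (α ⊕ α × β))ᶜ)).connectedComponentMk
        (cLift S D hSD u)).supp) := by
  classical
  set Γ := (corona G H).induce ((S : Set (α ⊕ α × β))ᶜ) with hΓ
  set c := Γ.connectedComponentMk (cLift S D hSD u) with hc
  set c' := (G.induce ((D : Set α)ᶜ)).connectedComponentMk u with hc'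
  have hval : ∀ v : ((D : Set α)ᶜ : Set α), v ∈ c'.supp → ∀ t : Option β,
      ∃ z : ((S : Set (α ⊕ α × β))ᶜ : Set _), z ∈ c.supp ∧
        z.1 = t.elim (Sum.inl v.1) (fun b => Sum.inr (v.1, b)) := by
    intro v hv t
    have hv' : (G.induce ((D : Set α)ᶜ)).connectedComponentMk v = c' :=
      (ConnectedComponent.mem_supp_iff _ _).1 hv
    have hr : (G.induce ((D : Set α)ᶜ)).Reachable v u := ConnectedComponent.eq.mp hv'
    have h1 : Γ.Reachable (cLift S D hSD v) (cLift S D hSD u) :=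
      cLift_reach G H S D hSD hr
    cases t with
    | none =>
      exact ⟨cLift S D hSD v,
        (ConnectedComponent.mem_supp_iff _ _).2 (ConnectedComponent.eq.mpr h1), rfl⟩
    | some b =>
      have hz : Sum.inr (v.1, b) ∈ ((S : Set (α ⊕ α × β))ᶜ) := fun hmem => v.2 (hS2 v.1 b hmem)
      refine ⟨⟨Sum.inr (v.1, b), hz⟩, ?_, rfl⟩
      have hadj : Γ.Adj ⟨Sum.inr (v.1, b), hz⟩ (cLift S D hSD v) :=
        show (corona G H).Adj (Sum.inr (v.1, b)) (Sum.inl v.1) from rfl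
      exact (ConnectedComponent.mem_supp_iff _ _).2
        (ConnectedComponent.eq.mpr (hadj.reachable.trans h1))
  choose F hF1 hF2 using hval
  let F' : ↥c'.supp × Option β → ↥c.supp := fun vt => ⟨F vt.1.1 vt.1.2 vt.2, hF1 _ _ _⟩
  have hinj : Function.Injective F' := by
    intro x y hxy
    have h1 : (F x.1.1 x.1.2 x.2).1 = (F y.1.1 y.1.2 y.2).1 := congrArg (fun t => t.1.1) hxy
    rw [hF2, hF2] at h1
    obtain ⟨he, ht⟩ := option_elim_inj h1
    exact Prod.ext (Subtype.ext (Subtype.ext he)) ht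
  have hle := Nat.card_le_card_of_injective F' hinj
  rw [Nat.card_prod, Finite.card_option, Nat.card_eq_fintype_card (α := β)] at hle
  exact hle

end aux

private lemma corona_down {α β : Type*} [Fintype α] [Fintype β] [DecidableEq α] [DecidableEq β]
    (G : SimpleGraph α) (H : SimpleGraph β) (g k : ℕ)
    (hG : G.Connected) (hk1 : 1 ≤ k)
    (hg1 : k * (Fintype.card β + 1) < g + 1)
    (X : Finset α) (hXmin : X.card = extraConn G k)
    (S : Finset (α ⊕ α × β)) (hS : IsRgCutset (corona G H) g S) :
    X.card * (Fintype.card β + 1) ≤ S.card := by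
  classical
  -- Step 1: if a `G`-vertex is removed, its whole copy of `H` is removed
  have hS1 : ∀ u b, Sum.inl u ∈ S → Sum.inr (u, b) ∈ S := by
    intro u b hu
    by_contra hb
    have hb' : Sum.inr (u, b) ∈ ((S : Set (α ⊕ α × β))ᶜ) := hb
    set Γ := (corona G H).induce ((S : Set (α ⊕ α × β))ᶜ) with hΓ
    set x0 : ((S : Set (α ⊕ α × β))ᶜ : Set _) := ⟨Sum.inr (u, b), hb'⟩ with hx0
    have hcard := hS.2.2 (Γ.connectedComponentMk x0)
    have haux : ∀ (a c : ((S : Set (α ⊕ α × β))ᶜ : Set _)), Γ.Reachable a c →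
        (∃ y, c.1 = Sum.inr (u, y)) → ∃ y, a.1 = Sum.inr (u, y) := by
      intro a c hr
      obtain ⟨w⟩ := hr
      induction w with
      | nil => exact id
      | @cons a z c hadj p ih =>
        intro hc
        obtain ⟨y, hy⟩ := ih hc
        obtain ⟨(v | ⟨v, y'⟩), ha⟩ := a
        · have hA : (corona G H).Adj (Sum.inl v) (Sum.inr (u, y)) := by
            have : (corona G H).Adj (Sum.inl v) z.1 := hadj
            rwa [hy] at this
          have hvu : v = u := hA
          exact absurd hu (by rw [← hvu]; exact ha)
        · have hA : (corona G H).Adj (Sum.inr (v, y')) (Sum.inr (u, y)) := by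
            have : (corona G H).Adj (Sum.inr (v, y')) z.1 := hadj
            rwa [hy] at this
          exact ⟨y', congrArg (fun t => Sum.inr (t, y') : α → α ⊕ α × β) hA.1⟩
    have hsub : ∀ x : ↥(Γ.connectedComponentMk x0).supp, ∃ y, x.1.1 = Sum.inr (u, y) := by
      intro x
      have hx : Γ.connectedComponentMk x.1 = Γ.connectedComponentMk x0 := x.2
      exact haux x.1 x0 (ConnectedComponent.eq.mp hx) ⟨b, rfl⟩
    choose f hf using hsub
    have hfinj : Function.Injective f := by
      intro x y hxy
      apply Subtype.ext; apply Subtype.ext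
      rw [hf x, hf y, hxy]
    have hle := Nat.card_le_card_of_injective f hfinj
    rw [Nat.card_eq_fintype_card (α := β)] at hle
    have hkm : Fintype.card β + 1 ≤ k * (Fintype.card β + 1) := Nat.le_mul_of_pos_left _ hk1
    omega
  set D : Finset α := Finset.univ.filter (fun u => Sum.inl u ∈ S) with hDdef
  have hSD : ∀ u, Sum.inl u ∈ S ↔ u ∈ D := by intro u; simp [hDdef]
  have hfull : ∀ u b, u ∈ D → Sum.inr (u, b) ∈ S := fun u b hu => hS1 u b ((hSD u).2 hu)
  have hpre' : ¬ (G.induce ((D : Set α)ᶜ)).Preconnected := by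
    intro hp
    exact hS.2.1 ((cPre_iff G H S D hSD hfull).2 hp)
  have hDne : D.Nonempty := by
    rw [Finset.nonempty_iff_ne_empty]
    intro hDe
    apply hpre'
    intro a b'
    exact reach_proj (G2 := G.induce ((D : Set α)ᶜ))
      (f := fun a : α => (⟨a, by simp [hDe]⟩ : ((D : Set α)ᶜ : Set α)))
      (fun a b hab => Or.inr hab) (hG.preconnected a.1 b'.1)
  have hcomp : ∀ c' : (G.induce ((D : Set α)ᶜ)).ConnectedComponent,
      k + 1 ≤ Nat.card c'.supp := by
    intro c'
    obtain ⟨u, hu⟩ := c'.exists_rep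
    rw [← hu]
    show k + 1 ≤ Nat.card ((G.induce ((D : Set α)ᶜ)).connectedComponentMk u).supp
    have h1 := hS.2.2 (((corona G H).induce ((S : Set (α ⊕ α × β))ᶜ)).connectedComponentMk
      (cLift S D hSD u))
    have h2 := cCard_down G H S D hSD hfull u
    by_contra hlt
    push_neg at hlt
    have h3 : Nat.card ((G.induce ((D : Set α)ᶜ)).connectedComponentMk u).supp * (Fintype.card β + 1)
        ≤ k * (Fintype.card β + 1) := mul_le_mul_left (by omega) (Fintype.card β + 1)
    omega
  have hXD : X.card ≤ D.card := by
    rw [hXmin]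
    exact Nat.sInf_le ⟨D, rfl, hDne, hpre', hcomp⟩
  have hsub : D.disjSum (D ×ˢ Finset.univ) ⊆ S := by
    intro z hz
    rcases z with u | ⟨u, b⟩
    · rw [Finset.inl_mem_disjSum] at hz; exact (hSD u).2 hz
    · rw [Finset.inr_mem_disjSum, Finset.mem_product] at hz; exact hfull u b hz.1
  have hcard2 : D.card * (Fintype.card β + 1) ≤ S.card := by
    have h4 := Finset.card_le_card hsub
    rw [Finset.card_disjSum, Finset.card_product, Finset.card_univ] at h4
    have h5 : D.card * (Fintype.card β + 1) = D.card + D.card * Fintype.card β := by ring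
    omega
  calc X.card * (Fintype.card β + 1) ≤ D.card * (Fintype.card β + 1) := mul_le_mul_left hXD (Fintype.card β + 1)
    _ ≤ S.card := hcard2

private lemma corona_up {α β : Type*} [Fintype α] [Fintype β] [DecidableEq α] [DecidableEq β]
    (G : SimpleGraph α) (H : SimpleGraph β) (g k : ℕ)
    (hg2 : g + 1 ≤ (k + 1) * (Fintype.card β + 1))
    (X : Finset α) (hX : IsRgCutset G k X) :
    IsRgCutset (corona G H) g (X.disjSum (X ×ˢ Finset.univ)) := by
  classical
  set T := X.disjSum (X ×ˢ (Finset.univ : Finset β)) with hTdef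
  have hSD : ∀ u, Sum.inl u ∈ T ↔ u ∈ X := by intro u; simp [hTdef]
  have hfull : ∀ u b, u ∈ X → Sum.inr (u, b) ∈ T := by
    intro u b hu; simp [hTdef, hu]
  have hS2 : ∀ u b, Sum.inr (u, b) ∈ T → u ∈ X := by
    intro u b h
    rw [hTdef, Finset.inr_mem_disjSum, Finset.mem_product] at h
    exact h.1
  refine ⟨?_, ?_, ?_⟩
  · obtain ⟨u, hu⟩ := hX.1
    exact ⟨Sum.inl u, (hSD u).2 hu⟩
  · intro hp
    exact hX.2.1 ((cPre_iff G H T X hSD hfull).1 hp)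
  · intro c
    obtain ⟨x, hx⟩ := c.exists_rep
    have hc : c = ((corona G H).induce ((T : Set (α ⊕ α × β))ᶜ)).connectedComponentMk
        (cLift T X hSD (cProj T X hSD hfull x)) := by
      rw [← hx]
      exact ConnectedComponent.sound (cStep G H T X hSD hfull x)
    rw [hc]
    have h1 := cCard_up G H T X hSD hfull hS2 (cProj T X hSD hfull x)
    have h2 := hX.2.2 ((G.induce ((X : Set α)ᶜ)).connectedComponentMk (cProj T X hSD hfull x))
    have h3 : (k + 1) * (Fintype.card β + 1) ≤
        Nat.card ((G.induce ((X : Set α)ᶜ)).connectedComponentMk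
          (cProj T X hSD hfull x)).supp * (Fintype.card β + 1) := mul_le_mul_left h2 (Fintype.card β + 1)
    omega

theorem extraConn_corona_large_g {α β : Type*} [Fintype α] [Fintype β]
    [DecidableEq α] [DecidableEq β]
    (G : SimpleGraph α) (H : SimpleGraph β) (n m g k : ℕ)
    (hn : Fintype.card α = n) (hm : Fintype.card β = m)
    (hα : 2 ≤ n) (hG : G.Connected) (hH : H.Connected)
    (hk1 : 1 ≤ k) (hk2 : k ≤ (n - 3) / 2)
    (hg1 : k * (m + 1) < g + 1) (hg2 : g + 1 ≤ (k + 1) * (m + 1))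
    (X : Finset α) (hX : IsRgCutset G k X) (hXmin : X.card = extraConn G k) :
    extraConn (corona G H) g = X.card * (m + 1) := by
  classical
  subst hn hm
  have hcut := corona_up G H g k hg2 X hX
  have hTcard : (X.disjSum (X ×ˢ (Finset.univ : Finset β))).card = X.card * (Fintype.card β + 1) := by
    rw [Finset.card_disjSum, Finset.card_product, Finset.card_univ]; ring
  apply le_antisymm
  · exact Nat.sInf_le ⟨_, hTcard, hcut⟩
  · refine le_csInf ⟨_, _, hTcard, hcut⟩ ?_
    rintro y ⟨S, rfl, hS⟩
    exact corona_down G H g k hG hk1 hg1 X hXmin S hS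
end

section
/- For the wheel graph W_n of order n ≥ 5 (a cycle C_{n−1} plus a center vertex adjacent to all cycle vertices) and any g with 0 ≤ g ≤ ⌊(n−5)/2⌋, κ_g(W_n) = 3. -/
open SimpleGraph

abbrev WG (m : ℕ) : SimpleGraph (Fin m ⊕ Fin 1) :=
  joinG (cycleGraph m) (⊤ : SimpleGraph (Fin 1))

lemma wg_adj_inl_inl {m : ℕ} {a b : Fin m} :
    (WG m).Adj (Sum.inl a) (Sum.inl b) ↔ (cycleGraph m).Adj a b := Iff.rfl

lemma wg_adj_inl_inr {m : ℕ} {a : Fin m} {b : Fin 1} :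
    (WG m).Adj (Sum.inl a) (Sum.inr b) := trivial

lemma mod_helper {t m : ℕ} (ht : t < 2*m) (h : t % m = 1) : t = 1 ∨ t = m + 1 := by
  rcases Nat.lt_or_ge t m with h1 | h1
  · left; rwa [Nat.mod_eq_of_lt h1] at h
  · have h2 : t - m < m := by omega
    rw [Nat.mod_eq_sub_mod h1, Nat.mod_eq_of_lt h2] at h
    omega

/-- natural-number form of cycle adjacency (necessary direction) -/
lemma cyc_adj_nat {m : ℕ} (hm : 2 ≤ m) {a b : Fin m} (h : (cycleGraph m).Adj a b) :
    (b : ℕ) = a + 1 ∨ (a : ℕ) = b + 1 ∨ ((a : ℕ) = 0 ∧ (b : ℕ) = m - 1) ∨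
      ((b : ℕ) = 0 ∧ (a : ℕ) = m - 1) := by
  rw [cycleGraph_adj'] at h
  have ha := a.isLt; have hb := b.isLt
  rcases h with h | h
  · rw [Fin.sub_def] at h
    rcases mod_helper (by omega) h with h' | h' <;> omega
  · rw [Fin.sub_def] at h
    rcases mod_helper (by omega) h with h' | h' <;> omega

/-- consecutive vertices are adjacent in the cycle -/
lemma cyc_adj_of_succ {m : ℕ} (hm : 2 ≤ m) {a b : Fin m} (h : (b:ℕ) = (a:ℕ) + 1) :
    (cycleGraph m).Adj a b := by
  rw [cycleGraph_adj']
  right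
  rw [Fin.sub_def]
  show (m - ↑a + ↑b) % m = 1
  have hb := b.isLt
  have he : m - ↑a + ↑b = m + 1 := by omega
  rw [he, Nat.add_mod_left, Nat.mod_eq_of_lt (by omega)]

lemma cyc_adj_succ {m : ℕ} (hm : 2 ≤ m) {j : ℕ} (hj : j + 1 < m) :
    (cycleGraph m).Adj ⟨j, by omega⟩ ⟨j+1, hj⟩ :=
  cyc_adj_of_succ hm rfl

lemma cyc_adj_of_wrap {m : ℕ} (hm : 2 ≤ m) {a b : Fin m} (ha : (a:ℕ) = 0)
    (hb : (b:ℕ) = m - 1) : (cycleGraph m).Adj a b := by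
  rw [cycleGraph_adj']
  left
  rw [Fin.sub_def]
  show (m - ↑b + ↑a) % m = 1
  have he : m - ↑b + ↑a = 1 := by omega
  rw [he, Nat.mod_eq_of_lt (by omega)]

lemma cyc_adj_wrap {m : ℕ} (hm : 2 ≤ m) :
    (cycleGraph m).Adj ⟨0, by omega⟩ ⟨m-1, by omega⟩ :=
  cyc_adj_of_wrap hm rfl rfl

/-- chain reachability along an interval of the cycle inside `A` -/
lemma chain_reach {m : ℕ} (hm : 2 ≤ m) (A : Set (Fin m ⊕ Fin 1)) {a b : ℕ}
    (hab : a ≤ b) (hb : b < m)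
    (hA : ∀ j (h : j < m), a ≤ j → j ≤ b → Sum.inl (⟨j, h⟩ : Fin m) ∈ A) :
    ((WG m).induce A).Reachable ⟨Sum.inl ⟨a, by omega⟩, hA a (by omega) le_rfl hab⟩
      ⟨Sum.inl ⟨b, hb⟩, hA b hb hab le_rfl⟩ := by
  have key : ∀ d (hd : a + d ≤ b),
      ((WG m).induce A).Reachable ⟨Sum.inl ⟨a, by omega⟩, hA a (by omega) le_rfl hab⟩
        ⟨Sum.inl ⟨a + d, by omega⟩, hA (a+d) (by omega) (by omega) hd⟩ := by
    intro d
    induction d with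
    | zero => intro _; rfl
    | succ d ih =>
      intro hd
      refine (ih (by omega)).trans (Adj.reachable ?_)
      show (WG m).Adj (Sum.inl ⟨a + d, by omega⟩) (Sum.inl ⟨a + d + 1, by omega⟩)
      exact cyc_adj_succ hm (by omega)
  have heq : a + (b - a) = b := by omega
  simpa only [heq] using key (b - a) (by omega)

/-- if the hub is present, the induced graph is preconnected -/
lemma preconn_of_center {m : ℕ} (A : Set (Fin m ⊕ Fin 1)) (hc : Sum.inr 0 ∈ A) :
    ((WG m).induce A).Preconnected := by
  have key : ∀ z : A, ((WG m).induce A).Reachable z ⟨Sum.inr 0, hc⟩ := by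
    rintro ⟨(a | b), hz⟩
    · exact Adj.reachable (show (WG m).Adj (Sum.inl a) (Sum.inr 0) from trivial)
    · have : b = 0 := Subsingleton.elim _ _
      subst this; rfl
  intro x y
  exact (key x).trans (key y).symm

/-- if the hub is absent but at most one cycle vertex `w` is missing,
the induced graph is preconnected -/
lemma preconn_cycle_minus {m : ℕ} (hm : 4 ≤ m) (A : Set (Fin m ⊕ Fin 1)) (w : Fin m)
    (hsub : ∀ x ∈ A, ∃ k : Fin m, x = Sum.inl k)
    (hsup : ∀ k : Fin m, k ≠ w → Sum.inl k ∈ A) :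
    ((WG m).induce A).Preconnected := by
  have hm2 : 2 ≤ m := by omega
  have hsup' : ∀ (j : ℕ) (h : j < m), j ≠ w.val → Sum.inl (⟨j, h⟩ : Fin m) ∈ A := by
    intro j h hj
    exact hsup ⟨j, h⟩ (by simp [Fin.ext_iff]; omega)
  -- canonical target
  by_cases hw0 : w.val = 0
  · -- target ⟨1⟩
    have hz : Sum.inl (⟨1, by omega⟩ : Fin m) ∈ A := hsup' 1 (by omega) (by omega)
    have key : ∀ x : A, ((WG m).induce A).Reachable x ⟨_, hz⟩ := by
      rintro ⟨x, hx⟩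
      obtain ⟨k, rfl⟩ := hsub x hx
      by_cases hk : k.val = 0
      · refine Adj.reachable ?_
        show (WG m).Adj (Sum.inl k) (Sum.inl ⟨1, by omega⟩)
        exact cyc_adj_of_succ hm2 (by simp [hk])
      · have h1 : 1 ≤ k.val := by omega
        have := chain_reach hm2 A h1 k.isLt
          (fun j h hj1 hj2 => hsup' j h (by omega))
        have heq : (⟨Sum.inl ⟨k.val, k.isLt⟩, hsup' k.val k.isLt (by omega)⟩ : A) = ⟨Sum.inl k, hx⟩ :=
          Subtype.ext (congrArg Sum.inl (by simp))
        exact (heq ▸ this).symm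
    intro x y
    exact (key x).trans (key y).symm
  · -- target ⟨0⟩
    have hz : Sum.inl (⟨0, by omega⟩ : Fin m) ∈ A := hsup' 0 (by omega) (by omega)
    have key : ∀ x : A, ((WG m).induce A).Reachable x ⟨_, hz⟩ := by
      have reach_lt : ∀ (j : ℕ) (h : j < m) (hj : j < w.val) (hj' : j ≠ w.val),
          ((WG m).induce A).Reachable ⟨Sum.inl ⟨j, h⟩, hsup' j h hj'⟩ ⟨_, hz⟩ := by
        intro j h hj hj'
        exact (chain_reach hm2 A (Nat.zero_le j) h
          (fun i hi hi1 hi2 => hsup' i hi (by omega))).symm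
      rintro ⟨x, hx⟩
      obtain ⟨k, rfl⟩ := hsub x hx
      rcases lt_trichotomy k.val w.val with hk | hk | hk
      · have this' := reach_lt k.val k.isLt hk (by omega)
        have heq : (⟨Sum.inl ⟨k.val, k.isLt⟩, hsup' k.val k.isLt (by omega)⟩ : A) = ⟨Sum.inl k, hx⟩ :=
          Subtype.ext (congrArg Sum.inl (by simp))
        exact heq ▸ this'
      · -- k = w : step to w-1 then chain
        have hwlt := w.isLt
        have hw1m : w.val - 1 < m := by omega
        have hstep : ((WG m).induce A).Adj
            ⟨Sum.inl k, hx⟩ ⟨Sum.inl ⟨w.val - 1, hw1m⟩, hsup' _ hw1m (by omega)⟩ := by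
          show (WG m).Adj (Sum.inl k) (Sum.inl ⟨w.val - 1, hw1m⟩)
          exact (cyc_adj_of_succ hm2 (by simp; omega)).symm
        exact (Adj.reachable hstep).trans (reach_lt (w.val - 1) hw1m (by omega) (by omega))
      · -- k > w : chain up to m-1, then wrap edge to 0
        have hkm := k.isLt
        have chain1 := chain_reach hm2 A (show k.val ≤ m - 1 by omega) (by omega)
          (fun i hi hi1 hi2 => hsup' i hi (by omega))
        have heq : (⟨Sum.inl ⟨k.val, by omega⟩, hsup' k.val (by omega) (by omega)⟩ : A) = ⟨Sum.inl k, hx⟩ :=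
          Subtype.ext (congrArg Sum.inl (by simp))
        rw [heq] at chain1
        have hstep : ((WG m).induce A).Adj
            ⟨Sum.inl ⟨m-1, by omega⟩, hsup' _ (by omega) (by omega)⟩ ⟨Sum.inl ⟨0, by omega⟩, hz⟩ := by
          show (WG m).Adj (Sum.inl (⟨m-1, by omega⟩ : Fin m)) (Sum.inl (⟨0, by omega⟩ : Fin m))
          exact (cyc_adj_wrap hm2).symm
        exact chain1.trans (Adj.reachable hstep)
    intro x y
    exact (key x).trans (key y).symm

/-- lower bound: every R_g-cutset of the wheel has at least 3 vertices -/
lemma wheel_lower {m g : ℕ} (hm : 4 ≤ m) (S : Finset (Fin m ⊕ Fin 1))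
    (hS : IsRgCutset (WG m) g S) : 3 ≤ S.card := by
  by_contra hcard
  push_neg at hcard
  obtain ⟨-, hnp, -⟩ := hS
  apply hnp
  set A : Set (Fin m ⊕ Fin 1) := ((S : Set _))ᶜ with hA
  by_cases hc : Sum.inr 0 ∈ S
  · -- hub removed; at most one cycle vertex removed
    have hsub : ∀ x ∈ A, ∃ k : Fin m, x = Sum.inl k := by
      rintro (k | b) hx
      · exact ⟨k, rfl⟩
      · exfalso
        have hb : b = 0 := Subsingleton.elim _ _
        subst hb
        exact hx (by simpa using hc)
    have hT : (S.erase (Sum.inr 0)).card ≤ 1 := by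
      rw [Finset.card_erase_of_mem hc]; omega
    rcases (S.erase (Sum.inr 0)).eq_empty_or_nonempty with hE | ⟨x, hxT⟩
    · refine preconn_cycle_minus hm A ⟨0, by omega⟩ hsub ?_
      intro k _
      intro hk
      have : Sum.inl k ∈ S.erase (Sum.inr 0) :=
        Finset.mem_erase.mpr ⟨by simp, by simpa using hk⟩
      rw [hE] at this
      simp at this
    · obtain ⟨w, rfl⟩ : ∃ k : Fin m, x = Sum.inl k := by
        rcases x with k | b
        · exact ⟨k, rfl⟩
        · exfalso
          have hb : b = 0 := Subsingleton.elim _ _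
          subst hb
          exact (Finset.mem_erase.mp hxT).1 rfl
      refine preconn_cycle_minus hm A w hsub ?_
      intro k hkw hk
      have hmem : Sum.inl k ∈ S.erase (Sum.inr 0) :=
        Finset.mem_erase.mpr ⟨by simp, by simpa using hk⟩
      have := Finset.card_le_one.mp hT _ hmem _ hxT
      simp only [Sum.inl.injEq] at this
      exact hkw this
  · -- hub present in the complement
    exact preconn_of_center A (by simpa [hA] using hc)

/-- upper bound: an explicit R_g-cutset of size 3 -/
lemma wheel_upper {m g : ℕ} (hm : 2*g + 4 ≤ m) :
    ∃ S : Finset (Fin m ⊕ Fin 1), S.card = 3 ∧ IsRgCutset (WG m) g S := by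
  have hm2 : 2 ≤ m := by omega
  set p : Fin m := ⟨0, by omega⟩ with hp
  set q : Fin m := ⟨g+2, by omega⟩ with hq
  refine ⟨{Sum.inr 0, Sum.inl p, Sum.inl q}, ?_, ?_, ?_, ?_⟩
  · rw [Finset.card_insert_of_notMem (by simp), Finset.card_insert_of_notMem (by
      simp [hp, hq, Fin.ext_iff]), Finset.card_singleton]
  · exact ⟨_, Finset.mem_insert_self _ _⟩
  · -- not preconnected
    set A : Set (Fin m ⊕ Fin 1) :=
      ((({Sum.inr 0, Sum.inl p, Sum.inl q} : Finset (Fin m ⊕ Fin 1)) : Set _))ᶜ with hA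
    have hmemA : ∀ x, x ∈ A ↔ x ≠ Sum.inr 0 ∧ x ≠ Sum.inl p ∧ x ≠ Sum.inl q := by
      intro x; simp [hA]
    have hmemA' : ∀ (j : ℕ) (h : j < m), j ≠ 0 → j ≠ g + 2 → Sum.inl (⟨j,h⟩ : Fin m) ∈ A := by
      intro j h h0 h2
      rw [hmemA]
      refine ⟨by simp, by simp [hp, Fin.ext_iff]; omega, by simp [hq, Fin.ext_iff]; omega⟩
    classical
    set f : (Fin m ⊕ Fin 1) → Bool := fun x => match x with
      | Sum.inl k => decide ((k : ℕ) < g + 2)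
      | Sum.inr _ => true with hf
    have inv : ∀ x y : A, ((WG m).induce A).Adj x y → f x.1 = f y.1 := by
      rintro ⟨(a | a), hx⟩ ⟨(b | b), hy⟩ hadj
      · have hcyc : (cycleGraph m).Adj a b := hadj
        have hnat := cyc_adj_nat hm2 hcyc
        rw [hmemA] at hx hy
        have ha0 : (a : ℕ) ≠ 0 := fun h => hx.2.1 (by simp [hp, Fin.ext_iff, h])
        have ha2 : (a : ℕ) ≠ g + 2 := fun h => hx.2.2 (by simp [hq, Fin.ext_iff, h])
        have hb0 : (b : ℕ) ≠ 0 := fun h => hy.2.1 (by simp [hp, Fin.ext_iff, h])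
        have hb2 : (b : ℕ) ≠ g + 2 := fun h => hy.2.2 (by simp [hq, Fin.ext_iff, h])
        have ham := a.isLt; have hbm := b.isLt
        simp only [hf, decide_eq_decide]
        omega
      · exact (((hmemA _).mp hy).1 (by rw [Subsingleton.elim b 0])).elim
      · exact (((hmemA _).mp hx).1 (by rw [Subsingleton.elim a 0])).elim
      · exact (((hmemA _).mp hx).1 (by rw [Subsingleton.elim a 0])).elim
    have reach_inv : ∀ x y : A, ((WG m).induce A).Reachable x y → f x.1 = f y.1 := by
      intro x y h
      obtain ⟨w⟩ := h
      induction w with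
      | nil => rfl
      | cons h w ih => exact (inv _ _ h).trans ih
    intro hpre
    have h1 : Sum.inl (⟨1, by omega⟩ : Fin m) ∈ A := hmemA' 1 (by omega) (by omega) (by omega)
    have h2 : Sum.inl (⟨g+3, by omega⟩ : Fin m) ∈ A := hmemA' (g+3) (by omega) (by omega) (by omega)
    have := reach_inv ⟨_, h1⟩ ⟨_, h2⟩ (hpre _ _)
    simp [hf] at this
  · -- all components have ≥ g+1 vertices
    intro c
    obtain ⟨v, rfl⟩ := c.exists_rep
    obtain ⟨x, hx⟩ := v
    set A : Set (Fin m ⊕ Fin 1) :=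
      ((({Sum.inr 0, Sum.inl p, Sum.inl q} : Finset (Fin m ⊕ Fin 1)) : Set _))ᶜ with hA
    have hmemA : ∀ x, x ∈ A ↔ x ≠ Sum.inr 0 ∧ x ≠ Sum.inl p ∧ x ≠ Sum.inl q := by
      intro x; simp [hA]
    have hmemA' : ∀ (j : ℕ) (h : j < m), j ≠ 0 → j ≠ g + 2 → Sum.inl (⟨j,h⟩ : Fin m) ∈ A := by
      intro j h h0 h2
      rw [hmemA]
      refine ⟨by simp, by simp [hp, Fin.ext_iff]; omega, by simp [hq, Fin.ext_iff]; omega⟩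
    obtain k | b := x
    swap
    · exfalso
      exact ((hmemA _).mp hx).1 (by rw [Subsingleton.elim b 0])
    have hk := (hmemA _).mp hx
    have hk0 : (k : ℕ) ≠ 0 := fun h => hk.2.1 (by simp [hp, Fin.ext_iff, h])
    have hk2 : (k : ℕ) ≠ g + 2 := fun h => hk.2.2 (by simp [hq, Fin.ext_iff, h])
    have hkm := k.isLt
    -- choose the arc containing k
    obtain ⟨lo, hi, hklo, hkhi, hhim, hgap, harc⟩ :
        ∃ lo hi : ℕ, lo ≤ (k:ℕ) ∧ (k:ℕ) ≤ hi ∧ hi < m ∧ lo + g ≤ hi ∧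
          ∀ j, lo ≤ j → j ≤ hi → j ≠ 0 ∧ j ≠ g + 2 := by
      rcases lt_or_ge (k : ℕ) (g+2) with h | h
      · exact ⟨1, g+1, by omega, by omega, by omega, by omega, fun j h1 h2 => by omega⟩
      · exact ⟨g+3, m-1, by omega, by omega, by omega, by omega, fun j h1 h2 => by omega⟩
    have hmem : ∀ (j : ℕ) (h1 : lo ≤ j) (h2 : j ≤ hi), Sum.inl (⟨j, by omega⟩ : Fin m) ∈ A :=
      fun j h1 h2 => hmemA' j (by omega) (harc j h1 h2).1 (harc j h1 h2).2
    have reach : ∀ (j : ℕ) (h1 : lo ≤ j) (h2 : j ≤ hi),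
        ((WG m).induce A).Reachable ⟨Sum.inl ⟨lo, by omega⟩, hmem lo le_rfl (by omega)⟩
          ⟨Sum.inl ⟨j, by omega⟩, hmem j h1 h2⟩ := by
      intro j h1 h2
      exact chain_reach hm2 A h1 (by omega) (fun i hi' hi1 hi2 => hmem i hi1 (hi2.trans h2))
    have heq : (⟨Sum.inl ⟨(k:ℕ), hkm⟩, hmem (k:ℕ) hklo hkhi⟩ : A) = ⟨Sum.inl k, hx⟩ :=
      Subtype.ext (congrArg Sum.inl (by simp))
    let F : Fin (g+1) → ((((WG m).induce A).connectedComponentMk ⟨Sum.inl k, hx⟩).supp : Set _) :=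
      fun i => ⟨⟨Sum.inl ⟨lo + i, by omega⟩, hmem _ (by omega) (by omega)⟩,
        (ConnectedComponent.mem_supp_iff _ _).mpr (ConnectedComponent.sound
          ((reach (lo + i) (by omega) (by omega)).symm.trans
            (heq ▸ reach (k:ℕ) hklo hkhi)))⟩
    have hFinj : Function.Injective F := by
      intro i j hij
      have h' := congrArg (fun z => z.1.1) hij
      simp only [F, Sum.inl.injEq, Fin.mk.injEq] at h'
      exact Fin.ext (by omega)
    have := Nat.card_le_card_of_injective F hFinj
    simp at this ⊢; exact this

lemma wheel_main {m g : ℕ} (hm : 2*g + 4 ≤ m) : extraConn (WG m) g = 3 := by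
  have h3 : 3 ∈ {k | ∃ S : Finset (Fin m ⊕ Fin 1), S.card = k ∧ IsRgCutset (WG m) g S} := by
    obtain ⟨S, hc, hS⟩ := wheel_upper hm
    exact ⟨S, hc, hS⟩
  refine le_antisymm (Nat.sInf_le h3) (le_csInf ⟨3, h3⟩ ?_)
  rintro k ⟨S, rfl, hS⟩
  exact wheel_lower (by omega) S hS

theorem extraConn_wheel (n g : ℕ) (hn : 5 ≤ n) (hg : g ≤ (n - 5) / 2) :
    extraConn (joinG (cycleGraph (n - 1)) (⊤ : SimpleGraph (Fin 1))) g = 3 := by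
  exact wheel_main (m := n - 1) (by omega)
end

section
/- Let G be a connected graph of order n with diameter d, and let g be an integer with 0 ≤ g ≤ ⌊d/2⌋ − 1. Then κ_g(G) ≤ n − d. -/
open SimpleGraph

private lemma aux_dist_getVert {V : Type*} {G : SimpleGraph V} (hG : G.Connected)
    {u v : V} (p : G.Walk u v) (i : ℕ) : G.dist u (p.getVert i) ≤ i := by
  induction i with
  | zero => simp
  | succ i ih =>
    by_cases h : i < p.length
    · have hadj := p.adj_getVert_succ h
      have h1 : G.dist (p.getVert i) (p.getVert (i + 1)) ≤ 1 := by
        have := SimpleGraph.dist_le hadj.toWalk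
        simpa using this
      have := hG.dist_triangle (u := u) (v := p.getVert i) (w := p.getVert (i + 1))
      omega
    · rw [p.getVert_of_length_le (by omega), ← p.getVert_of_length_le (i := i) (by omega)]
      omega

theorem extraConn_le_card_sub_diam {V : Type*} [Fintype V] [DecidableEq V]
    (G : SimpleGraph V) (g d : ℕ) (hG : G.Connected) (hd : G.diam = d)
    (hg : g + 1 ≤ d / 2) :
    extraConn G g ≤ Fintype.card V - d := by
  have hne : Nonempty V := hG.nonempty
  have hd2 : 2 * g + 2 ≤ d := by omega
  obtain ⟨u, v, huv⟩ := G.exists_dist_eq_diam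
  rw [hd] at huv
  obtain ⟨p, hp⟩ := (hG u v).exists_walk_length_eq_dist
  rw [huv] at hp
  set f : ℕ → V := p.getVert with hf
  -- prefix and suffix distance bounds
  have hpre : ∀ i : ℕ, G.dist u (f i) ≤ i := fun i => aux_dist_getVert hG p i
  have hsuf : ∀ i : ℕ, i ≤ d → G.dist (f i) v ≤ d - i := by
    intro i hi
    have h1 : p.reverse.getVert (d - i) = f i := by
      rw [p.getVert_reverse, hp]
      congr 1
      omega
    have := aux_dist_getVert hG p.reverse (d - i)
    rw [h1, G.dist_comm] at this
    exact this
  -- lower bound on distances along the geodesic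
  have hfar : ∀ i j : ℕ, i ≤ j → j ≤ d → j - i ≤ G.dist (f i) (f j) := by
    intro i j hij hj
    have t1 := hG.dist_triangle (u := u) (v := f i) (w := v)
    have t2 := hG.dist_triangle (u := f i) (v := f j) (w := v)
    have h1 := hpre i
    have h2 := hsuf j hj
    omega
  have hinj : ∀ i j : ℕ, i ≤ d → j ≤ d → f i = f j → i = j := by
    intro i j hi hj hfe
    rcases le_total i j with h | h
    · have := hfar i j h hj
      rw [hfe, G.dist_self] at this
      omega
    · have := hfar j i h hi
      rw [hfe, G.dist_self] at this
      omega
  have hnoadj : ∀ i j : ℕ, i ≤ g → g + 2 ≤ j → j ≤ d → ¬ G.Adj (f i) (f j) := by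
    intro i j hi hj1 hj2 hadj
    have h1 : G.dist (f i) (f j) ≤ 1 := by
      have := SimpleGraph.dist_le hadj.toWalk
      simpa using this
    have := hfar i j (by omega) hj2
    omega
  -- the finsets
  set A : Finset V := (Finset.range (g + 1)).image f with hA
  set B : Finset V := (Finset.Icc (g + 2) d).image f with hB
  set S : Finset V := (A ∪ B)ᶜ with hS
  have hmemA : ∀ x : V, x ∈ A ↔ ∃ i, i ≤ g ∧ f i = x := by
    intro x
    simp only [hA, Finset.mem_image, Finset.mem_range]
    constructor
    · rintro ⟨i, hi, rfl⟩; exact ⟨i, by omega, rfl⟩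
    · rintro ⟨i, hi, rfl⟩; exact ⟨i, by omega, rfl⟩
  have hmemB : ∀ x : V, x ∈ B ↔ ∃ j, g + 2 ≤ j ∧ j ≤ d ∧ f j = x := by
    intro x
    simp only [hB, Finset.mem_image, Finset.mem_Icc]
    constructor
    · rintro ⟨j, ⟨h1, h2⟩, rfl⟩; exact ⟨j, h1, h2, rfl⟩
    · rintro ⟨j, h1, h2, rfl⟩; exact ⟨j, ⟨h1, h2⟩, rfl⟩
  have hcardA : A.card = g + 1 := by
    rw [hA, Finset.card_image_of_injOn, Finset.card_range]
    intro i hi j hj hij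
    simp only [Finset.coe_range, Set.mem_Iio] at hi hj
    exact hinj i j (by omega) (by omega) hij
  have hcardB : B.card = d - g - 1 := by
    rw [hB, Finset.card_image_of_injOn, Nat.card_Icc]
    · omega
    · intro i hi j hj hij
      simp only [Finset.coe_Icc, Set.mem_Icc] at hi hj
      exact hinj i j (by omega) (by omega) hij
  have hdisj : Disjoint A B := by
    rw [Finset.disjoint_left]
    intro x hxA hxB
    obtain ⟨i, hi, rfl⟩ := (hmemA x).1 hxA
    obtain ⟨j, hj1, hj2, hje⟩ := (hmemB _).1 hxB
    have := hinj j i (by omega) (by omega) hje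
    omega
  have hcardAB : (A ∪ B).card = d := by
    rw [Finset.card_union_of_disjoint hdisj, hcardA, hcardB]
    omega
  have hcardS : S.card = Fintype.card V - d := by
    rw [hS, Finset.card_compl, hcardAB]
  -- n ≥ d + 1
  have hnd : d + 1 ≤ Fintype.card V := by
    have hinj' : Set.InjOn f ↑(Finset.range (d + 1)) := by
      intro i hi j hj hij
      simp only [Finset.coe_range, Set.mem_Iio] at hi hj
      exact hinj i j (by omega) (by omega) hij
    calc d + 1 = ((Finset.range (d + 1)).image f).card := by
          rw [Finset.card_image_of_injOn hinj', Finset.card_range]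
      _ ≤ Fintype.card V := Finset.card_le_univ _
  -- the complement of S as a set
  have hWset : ((S : Set V)ᶜ) = ↑(A ∪ B) := by
    rw [hS]; simp only [Finset.coe_compl, compl_compl, Finset.coe_union]
  set W : Set V := ((S : Set V)ᶜ) with hW
  have hmemW : ∀ x : V, x ∈ W ↔ x ∈ A ∨ x ∈ B := by
    intro x
    rw [hWset]
    simp
  have hWk : ∀ k : ℕ, k ≤ d → k ≠ g + 1 → f k ∈ W := by
    intro k hk hkg
    rw [hmemW]
    rcases le_or_gt k g with h | h
    · exact Or.inl ((hmemA _).2 ⟨k, h, rfl⟩)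
    · exact Or.inr ((hmemB _).2 ⟨k, by omega, hk, rfl⟩)
  set H : SimpleGraph W := G.induce W with hH
  -- chain reachability along consecutive path vertices
  have hchain : ∀ (m i : ℕ), i + m ≤ d → (∀ k, i ≤ k → k ≤ i + m → k ≠ g + 1) →
      ∀ (h1 : f i ∈ W) (h2 : f (i + m) ∈ W), H.Reachable ⟨f i, h1⟩ ⟨f (i + m), h2⟩ := by
    intro m
    induction m with
    | zero => intro i _ _ h1 h2; exact Reachable.refl _
    | succ m ih =>
      intro i hle hk h1 h2
      have h3 : f (i + m) ∈ W := hWk _ (by omega) (hk _ (by omega) (by omega))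
      have step : H.Adj ⟨f (i + m), h3⟩ ⟨f (i + (m + 1)), h2⟩ := by
        have : G.Adj (f (i + m)) (f (i + m + 1)) := p.adj_getVert_succ (by omega)
        exact this
      exact (ih i (by omega) (fun k hk1 hk2 => hk k hk1 (by omega)) h1 h3).trans step.reachable
  have hchain2 : ∀ i j : ℕ, i ≤ j → j ≤ d → (∀ k, i ≤ k → k ≤ j → k ≠ g + 1) →
      ∀ (h1 : f i ∈ W) (h2 : f j ∈ W), H.Reachable ⟨f i, h1⟩ ⟨f j, h2⟩ := by
    intro i j hij hjd hk h1 h2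
    have h2' : f (i + (j - i)) ∈ W := by
      rw [show i + (j - i) = j by omega]; exact h2
    have hr := hchain (j - i) i (by omega) (fun k hk1 hk2 => hk k hk1 (by omega)) h1 h2'
    have he : (⟨f (i + (j - i)), h2'⟩ : W) = ⟨f j, h2⟩ :=
      Subtype.ext (congrArg f (by omega))
    rwa [he] at hr
  -- invariance of membership in A along reachability in H
  have hstep : ∀ x y : W, H.Adj x y → ((x : V) ∈ A → (y : V) ∈ A) := by
    intro x y hadj hxA
    have hyW : (y : V) ∈ W := y.2
    rcases (hmemW _).1 hyW with h | h
    · exact h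
    · exfalso
      obtain ⟨i, hi, hfi⟩ := (hmemA _).1 hxA
      obtain ⟨j, hj1, hj2, hfj⟩ := (hmemB _).1 h
      have hG' : G.Adj (x : V) (y : V) := hadj
      rw [← hfi, ← hfj] at hG'
      exact hnoadj i j hi hj1 hj2 hG'
  have hinv : ∀ x y : W, H.Reachable x y → ((x : V) ∈ A ↔ (y : V) ∈ A) := by
    intro x y h
    obtain ⟨w⟩ := h
    induction w with
    | nil => exact Iff.rfl
    | cons h q ih =>
      exact Iff.trans ⟨fun hh => hstep _ _ h hh, fun hh => hstep _ _ h.symm hh⟩ ih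
  -- the two endpoints of the cut
  have hfgW : f g ∈ W := hWk g (by omega) (by omega)
  have hfg2W : f (g + 2) ∈ W := hWk (g + 2) (by omega) (by omega)
  have hfgA : f g ∈ A := (hmemA _).2 ⟨g, le_refl _, rfl⟩
  have hfg2A : f (g + 2) ∉ A := by
    intro h
    obtain ⟨i, hi, hfi⟩ := (hmemA _).1 h
    have := hinj i (g + 2) (by omega) (by omega) hfi
    omega
  have hcut : IsRgCutset G g S := by
    refine ⟨?_, ?_, ?_⟩
    · rw [← Finset.card_pos, hcardS]
      omega
    · intro hpc
      have := hinv ⟨f g, hfgW⟩ ⟨f (g + 2), hfg2W⟩ (hpc _ _)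
      exact hfg2A (this.1 hfgA)
    · intro c
      obtain ⟨x, hx⟩ := c.exists_rep
      have hxW : (x : V) ∈ W := x.2
      rcases (hmemW _).1 hxW with hxA | hxB
      · -- component contains all of A
        obtain ⟨i0, hi0, hfi0⟩ := (hmemA _).1 hxA
        have hmem : ∀ i : ℕ, i ≤ g → ∀ h : f i ∈ W, (⟨f i, h⟩ : W) ∈ c.supp := by
          intro i hi h
          rw [SimpleGraph.ConnectedComponent.mem_supp_iff, ← hx]
          have hx' : x = (⟨f i0, hWk _ (by omega) (by omega)⟩ : W) := by
            apply Subtype.ext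
            simp [← hfi0]
          rw [hx']
          apply SimpleGraph.ConnectedComponent.sound
          rcases le_total i i0 with hle | hle
          · exact hchain2 i i0 hle (by omega) (fun k h1 h2 => by omega) _ _
          · exact (hchain2 i0 i hle (by omega) (fun k h1 h2 => by omega) _ _).symm
        -- inject Fin (g+1) into c.supp
        have hcard : g + 1 ≤ Nat.card c.supp := by
          have : Function.Injective (fun i : Fin (g + 1) =>
              (⟨⟨f i, hWk i (by omega) (by omega)⟩, hmem i (by omega) _⟩ : c.supp)) := by
            intro a b hab
            have : f (a : ℕ) = f (b : ℕ) := by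
              simpa [Subtype.ext_iff] using hab
            have := hinj a b (by omega) (by omega) this
            exact Fin.ext this
          have h := Nat.card_le_card_of_injective _ this
          rw [Nat.card_eq_fintype_card (α := Fin (g + 1)), Fintype.card_fin] at h
          exact h
        exact hcard
      · -- component contains all of B
        obtain ⟨j0, hj01, hj02, hfj0⟩ := (hmemB _).1 hxB
        have hmem : ∀ j : ℕ, g + 2 ≤ j → j ≤ d → ∀ h : f j ∈ W, (⟨f j, h⟩ : W) ∈ c.supp := by
          intro j hj1 hj2 h
          rw [SimpleGraph.ConnectedComponent.mem_supp_iff, ← hx]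
          have hx' : x = (⟨f j0, hWk _ (by omega) (by omega)⟩ : W) := by
            apply Subtype.ext
            simp [← hfj0]
          rw [hx']
          apply SimpleGraph.ConnectedComponent.sound
          rcases le_total j j0 with hle | hle
          · exact hchain2 j j0 hle (by omega) (fun k h1 h2 => by omega) _ _
          · exact (hchain2 j0 j hle (by omega) (fun k h1 h2 => by omega) _ _).symm
        have hcard : g + 1 ≤ Nat.card c.supp := by
          have : Function.Injective (fun i : Fin (g + 1) =>
              (⟨⟨f (g + 2 + i), hWk _ (by omega) (by omega)⟩,
                hmem _ (by omega) (by omega) _⟩ : c.supp)) := by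
            intro a b hab
            have : f (g + 2 + (a : ℕ)) = f (g + 2 + (b : ℕ)) := by
              simpa [Subtype.ext_iff] using hab
            have := hinj _ _ (by omega) (by omega) this
            exact Fin.ext (by omega)
          have h := Nat.card_le_card_of_injective _ this
          rw [Nat.card_eq_fintype_card (α := Fin (g + 1)), Fintype.card_fin] at h
          exact h
        exact hcard
  exact Nat.sInf_le ⟨S, hcardS, hcut⟩
end

section
/- Let G be a connected graph of order n with 0 ≤ g ≤ ⌊(n−3)/2⌋ admitting an R_g-cutset. Then κ_g(G) = n−2g−2 and g = 0 hold simultaneously if and only if G is obtained from the complete graph K_n by deleting the edges of a matching. -/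
open SimpleGraph

private lemma exists_adj_of_reachable {W : Type*} (H : SimpleGraph W) (a b : W)
    (h : H.Reachable a b) (hab : a ≠ b) : ∃ c, H.Adj a c := by
  obtain ⟨p⟩ := h
  cases p with
  | nil => exact absurd rfl hab
  | cons h q => exact ⟨_, h⟩

/-- If nonadjacency is a matching and the graph induced on `T` is not preconnected,
then `T` consists of exactly two nonadjacent vertices. -/
private lemma not_preconnected_structure {V : Type*} (G : SimpleGraph V)
    (hmat : ∀ u v w : V, ¬G.Adj u v → ¬G.Adj u w → v ≠ u → w ≠ u → v = w)
    (T : Set V) (h : ¬ (G.induce T).Preconnected) :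
    ∃ u v : V, u ∈ T ∧ v ∈ T ∧ u ≠ v ∧ ¬ G.Adj u v ∧ T = {u, v} := by
  rw [Preconnected] at h
  push_neg at h
  obtain ⟨u, v, huv⟩ := h
  have hne : (u : V) ≠ (v : V) := by
    intro h
    apply huv
    rw [show u = v from Subtype.ext h]
  have hnadj : ¬ G.Adj (u : V) (v : V) := fun hadj =>
    huv (Adj.reachable (show (G.induce T).Adj u v from hadj))
  refine ⟨u, v, u.2, v.2, hne, hnadj, ?_⟩
  ext w
  simp only [Set.mem_insert_iff, Set.mem_singleton_iff]
  constructor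
  · intro hw
    by_contra hww
    push_neg at hww
    have h1 : G.Adj (u : V) w := by
      by_contra hn
      exact hww.2 (hmat u v w hnadj hn hne.symm hww.1).symm
    have h2 : G.Adj w (v : V) := by
      by_contra hn
      exact hww.1 (hmat v u w (fun a => hnadj a.symm) (fun a => hn a.symm) hne hww.2).symm
    exact huv ((show (G.induce T).Adj u ⟨w, hw⟩ from h1).reachable.trans
      (show (G.induce T).Adj ⟨w, hw⟩ v from h2).reachable)
  · rintro (rfl | rfl)
    exacts [u.2, v.2]

/-- If nonadjacency is a matching, every `R_g`-cutset forces `g = 0` and has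
cardinality `n - 2`. -/
private lemma cutset_of_matching {V : Type*} [Fintype V] [DecidableEq V]
    (G : SimpleGraph V) (g : ℕ)
    (hmat : ∀ u v w : V, ¬G.Adj u v → ¬G.Adj u w → v ≠ u → w ≠ u → v = w)
    (S : Finset V) (hS : IsRgCutset G g S) :
    g = 0 ∧ S.card = Fintype.card V - 2 := by
  obtain ⟨-, hpc, hcomp⟩ := hS
  obtain ⟨u, v, hu, hv, huv, hnadj, hT⟩ := not_preconnected_structure G hmat _ hpc
  have hbot : G.induce ((S : Set V)ᶜ) = ⊥ := by
    ext a b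
    simp only [bot_adj, iff_false]
    intro hadj
    have ha : (a : V) = u ∨ (a : V) = v := by
      have : (a : V) ∈ ({u, v} : Set V) := hT.le a.2; simpa using this
    have hb : (b : V) = u ∨ (b : V) = v := by
      have : (b : V) ∈ ({u, v} : Set V) := hT.le b.2; simpa using this
    have hadj' : G.Adj (a : V) (b : V) := hadj
    rcases ha with ha | ha <;> rcases hb with hb | hb <;> rw [ha, hb] at hadj'
    · exact G.irrefl hadj'
    · exact hnadj hadj'
    · exact hnadj hadj'.symm
    · exact G.irrefl hadj'
  have hg0 : g = 0 := by
    have hle := hcomp ((G.induce ((S : Set V)ᶜ)).connectedComponentMk ⟨u, hu⟩)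
    have hsupp : ((G.induce ((S : Set V)ᶜ)).connectedComponentMk ⟨u, hu⟩).supp
        = {⟨u, hu⟩} := by
      ext y
      simp only [ConnectedComponent.mem_supp_iff, Set.mem_singleton_iff,
        ConnectedComponent.eq]
      rw [hbot, reachable_bot]
    rw [hsupp] at hle
    simp only [Nat.card_coe_set_eq, Set.ncard_singleton] at hle
    omega
  have hScompl : S = ({u, v} : Finset V)ᶜ := by
    apply Finset.coe_injective
    rw [Finset.coe_compl, Finset.coe_insert, Finset.coe_singleton, ← hT, compl_compl]
  refine ⟨hg0, ?_⟩
  rw [hScompl, Finset.card_compl, Finset.card_insert_of_notMem (by simpa using huv),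
    Finset.card_singleton]

theorem extraConn_max_iff_complete_minus_matching {V : Type*} [Fintype V] [DecidableEq V]
    (G : SimpleGraph V) (g : ℕ) (hG : G.Connected)
    (hg : g ≤ (Fintype.card V - 3) / 2)
    (hex : ∃ S, IsRgCutset G g S) :
    (extraConn G g = Fintype.card V - 2 * g - 2 ∧ g = 0) ↔
      ∃ M : (⊤ : SimpleGraph V).Subgraph, M.IsMatching ∧
        G = (⊤ : SimpleGraph V) \ M.spanningCoe := by
  constructor
  · rintro ⟨h1, rfl⟩
    -- nonadjacency is a matching
    have hmat : ∀ u v w : V, ¬G.Adj u v → ¬G.Adj u w → v ≠ u → w ≠ u → v = w := by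
      intro u v w huv huw hvu hwu
      by_contra hvw
      by_cases hS : (Finset.univ \ ({u, v, w} : Finset V)).Nonempty
      · -- build a small cutset, contradicting minimality
        have hucompl : ∀ x : V, x ∈ ((↑(Finset.univ \ ({u, v, w} : Finset V)) : Set V))ᶜ ↔
            x = u ∨ x = v ∨ x = w := by
          intro x; simp only [Set.mem_compl_iff, Finset.coe_sdiff, Finset.coe_univ,
            Set.mem_diff, Set.mem_univ, true_and, not_not, Finset.coe_insert,
            Finset.coe_singleton, Set.mem_insert_iff, Set.mem_singleton_iff]
        have hcut : IsRgCutset G 0 (Finset.univ \ ({u, v, w} : Finset V)) := by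
          refine ⟨hS, ?_, ?_⟩
          · intro hpre
            have hTu : u ∈ ((↑(Finset.univ \ ({u, v, w} : Finset V)) : Set V))ᶜ :=
              (hucompl u).mpr (Or.inl rfl)
            have hTv : v ∈ ((↑(Finset.univ \ ({u, v, w} : Finset V)) : Set V))ᶜ :=
              (hucompl v).mpr (Or.inr (Or.inl rfl))
            obtain ⟨c, hc⟩ := exists_adj_of_reachable _ _ _ (hpre ⟨u, hTu⟩ ⟨v, hTv⟩)
              (by simp [Subtype.ext_iff]; exact fun h => hvu h.symm)
            have hc' : G.Adj u (c : V) := hc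
            rcases (hucompl (c : V)).mp c.2 with h | h | h <;> rw [h] at hc'
            · exact G.irrefl hc'
            · exact huv hc'
            · exact huw hc'
          · intro c
            obtain ⟨x, hx⟩ := c.exists_rep
            haveI : Nonempty c.supp :=
              ⟨⟨x, by rw [ConnectedComponent.mem_supp_iff]; exact hx⟩⟩
            have := Nat.card_pos (α := c.supp)
            omega
        have hmem : (Finset.univ \ ({u, v, w} : Finset V)).card ∈
            {k | ∃ S : Finset V, S.card = k ∧ IsRgCutset G 0 S} := ⟨_, rfl, hcut⟩
        have hle := Nat.sInf_le hmem
        rw [← extraConn, h1] at hle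
        have hc3 : ({u, v, w} : Finset V).card = 3 := by
          rw [Finset.card_insert_of_notMem (by
              simp only [Finset.mem_insert, Finset.mem_singleton]
              push_neg
              exact ⟨fun h => hvu h.symm, fun h => hwu h.symm⟩),
            Finset.card_insert_of_notMem (by simpa using hvw), Finset.card_singleton]
        have hcard : (Finset.univ \ ({u, v, w} : Finset V)).card = Fintype.card V - 3 := by
          rw [Finset.card_sdiff_of_subset (Finset.subset_univ _), Finset.card_univ, hc3]
        obtain ⟨x, hxmem⟩ := hS
        have h4 : 4 ≤ Fintype.card V := by
          have hsub : insert x ({u, v, w} : Finset V) ⊆ Finset.univ := Finset.subset_univ _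
          have := Finset.card_le_card hsub
          rw [Finset.card_insert_of_notMem (Finset.mem_sdiff.mp hxmem).2, hc3,
            Finset.card_univ] at this
          exact this
        rw [hcard] at hle
        omega
      · -- all of V is {u, v, w}: u is isolated, contradicting connectivity
        rw [Finset.not_nonempty_iff_eq_empty, Finset.sdiff_eq_empty_iff_subset] at hS
        obtain ⟨c, hc⟩ := exists_adj_of_reachable G u v (hG.preconnected u v) (fun h => hvu h.symm)
        have := hS (Finset.mem_univ c)
        simp only [Finset.mem_insert, Finset.mem_singleton] at this
        rcases this with rfl | rfl | rfl
        · exact G.irrefl hc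
        · exact huv hc
        · exact huw hc
    refine ⟨{ verts := {a | ∃ b, a ≠ b ∧ ¬ G.Adj a b},
              Adj := fun a b => a ≠ b ∧ ¬ G.Adj a b,
              adj_sub := fun h => h.1,
              edge_vert := fun h => ⟨_, h⟩,
              symm := ⟨fun a b h => ⟨h.1.symm, fun h' => h.2 h'.symm⟩⟩ }, ?_, ?_⟩
    · intro a ha
      obtain ⟨b, hab⟩ := ha
      refine ⟨b, hab, ?_⟩
      rintro y ⟨hay1, hay2⟩
      exact hmat a y b hay2 hab.2 hay1.symm hab.1.symm
    · ext a b
      simp only [sdiff_adj, top_adj, Subgraph.spanningCoe_adj]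
      constructor
      · intro h
        exact ⟨h.ne, fun h' => h'.2 h⟩
      · rintro ⟨hne, h'⟩
        by_contra hn
        exact h' ⟨hne, hn⟩
  · rintro ⟨M, hM, rfl⟩
    have hmat : ∀ u v w : V, ¬(⊤ \ M.spanningCoe).Adj u v → ¬(⊤ \ M.spanningCoe).Adj u w →
        v ≠ u → w ≠ u → v = w := by
      intro u v w huv huw hvu hwu
      simp only [sdiff_adj, top_adj, not_and, not_not] at huv huw
      have h1 : M.Adj u v := huv hvu.symm
      have h2 : M.Adj u w := huw hwu.symm
      obtain ⟨x, -, hx⟩ := hM (M.edge_vert h1)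
      rw [hx v h1, hx w h2]
    obtain ⟨S0, hS0⟩ := hex
    have hg0 := (cutset_of_matching _ g hmat S0 hS0).1
    subst hg0
    refine ⟨?_, rfl⟩
    rw [extraConn]
    have hset : {k | ∃ S : Finset V, S.card = k ∧ IsRgCutset (⊤ \ M.spanningCoe) 0 S}
        = {Fintype.card V - 2} := by
      ext k
      simp only [Set.mem_setOf_eq, Set.mem_singleton_iff]
      constructor
      · rintro ⟨S, rfl, hS⟩
        exact (cutset_of_matching _ 0 hmat S hS).2
      · rintro rfl
        exact ⟨S0, (cutset_of_matching _ 0 hmat S0 hS0).2, hS0⟩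
    rw [hset, csInf_singleton]
    omega
end

section
/- Let 1 ≤ g ≤ ⌊(n−3)/2⌋, and let T* be a tree of order n constructed as follows: take trees T', T'' each with exactly g+1 vertices and trees T_1,...,T_r each with at most g vertices (where the total order of T_1,...,T_r is n−2g−3), add a new vertex v, and join v by one edge to each of T', T'', T_1,...,T_r. Then κ_g(T*) = n − 2g − 2. -/
open SimpleGraph

section Aux

variable {V : Type*}

/-- Graph homomorphism between induced subgraphs along a subset inclusion. -/
def auxHomOfLe (G : SimpleGraph V) {A B : Set V} (h : A ⊆ B) : G.induce A →g G.induce B :=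
  ⟨fun x => ⟨x.1, h x.2⟩, fun hadj => hadj⟩

lemma aux_reachable_induce_of_walk (G : SimpleGraph V) {A B : Set V} {x y : ↥B}
    (p : (G.induce B).Walk x y) (hsupp : ∀ z ∈ p.support, (z : V) ∈ A)
    (hx : (x : V) ∈ A) (hy : (y : V) ∈ A) :
    (G.induce A).Reachable ⟨x, hx⟩ ⟨y, hy⟩ := by
  induction p with
  | nil => exact Reachable.refl _
  | @cons a b c h p ih =>
      have hb : (b : V) ∈ A := hsupp b (by simp)
      have hadj : (G.induce A).Adj ⟨a, hx⟩ ⟨b, hb⟩ := h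
      exact hadj.reachable.trans (ih (fun z hz => hsupp z (by simp [hz])) hb hy)

lemma aux_reachable_induce_of_walk' (G : SimpleGraph V) {A : Set V} {x y : V}
    (p : G.Walk x y) (hsupp : ∀ z ∈ p.support, z ∈ A)
    (hx : x ∈ A) (hy : y ∈ A) :
    (G.induce A).Reachable ⟨x, hx⟩ ⟨y, hy⟩ := by
  induction p with
  | nil => exact Reachable.refl _
  | @cons a b c h p ih =>
      have hb : b ∈ A := hsupp b (by simp)
      have hadj : (G.induce A).Adj ⟨a, hx⟩ ⟨b, hb⟩ := h
      exact hadj.reachable.trans (ih (fun z hz => hsupp z (by simp [hz])) hb hy)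

/-- In a connected graph, for every vertex `x ≠ v` there is a neighbor `w` of `v`
with `w ≠ v` which is connected to `x` in the graph with `v` removed. -/
lemma aux_neighbor_in_comp [DecidableEq V] (T : SimpleGraph V) (hT : T.Connected) (v : V)
    (x : ↥(({v} : Set V)ᶜ)) :
    ∃ (w : V) (hw : w ∈ ({v} : Set V)ᶜ), T.Adj v w ∧
      (T.induce (({v} : Set V)ᶜ)).Reachable ⟨w, hw⟩ x := by
  obtain ⟨p⟩ := hT.preconnected v x.1
  have hxv : v ≠ (x : V) := by
    have : (x : V) ≠ v := Set.mem_compl_singleton_iff.mp x.2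
    exact this.symm
  obtain ⟨w, h, q, hq⟩ := (p.bypass).exists_eq_cons_of_ne hxv
  have hnodup := (p.bypass_isPath).support_nodup
  rw [hq] at hnodup
  simp only [Walk.support_cons, List.nodup_cons] at hnodup
  have hvq : v ∉ q.support := hnodup.1
  have hws : ∀ z ∈ q.support, z ∈ ({v} : Set V)ᶜ := by
    intro z hz
    simp only [Set.mem_compl_iff, Set.mem_singleton_iff]
    rintro rfl; exact hvq hz
  have hw : w ∈ ({v} : Set V)ᶜ := hws w (by simp)
  have := aux_reachable_induce_of_walk' T q hws hw x.2
  exact ⟨w, hw, h, by simpa using this⟩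

/-- Any big (≥ g+1) component of `T - S` avoiding `v` matches exactly `c1` or `c2`. -/
lemma aux_capture [Fintype V] [DecidableEq V] (T : SimpleGraph V) (g : ℕ) (v : V)
    (c1 c2 : (T.induce (({v} : Set V)ᶜ)).ConnectedComponent)
    (h1 : Nat.card c1.supp = g + 1) (h2 : Nat.card c2.supp = g + 1)
    (hrest : ∀ c : (T.induce (({v} : Set V)ᶜ)).ConnectedComponent,
      c ≠ c1 → c ≠ c2 → Nat.card c.supp ≤ g)
    {A : Set V} (C : (T.induce A).ConnectedComponent)
    (hcard : g + 1 ≤ Nat.card C.supp)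
    (hnov : ∀ z : ↥A, z ∈ C.supp → (z : V) ≠ v) :
    ∃ c : (T.induce (({v} : Set V)ᶜ)).ConnectedComponent,
      (c = c1 ∨ c = c2) ∧ Subtype.val '' C.supp = Subtype.val '' c.supp := by
  obtain ⟨x, hx⟩ := C.exists_rep
  have hxC : x ∈ C.supp := (ConnectedComponent.mem_supp_iff _ _).mpr hx
  have hxv : (x : V) ∈ ({v} : Set V)ᶜ :=
    Set.mem_compl_singleton_iff.mpr (hnov x hxC)
  set c := (T.induce (({v} : Set V)ᶜ)).connectedComponentMk ⟨x.1, hxv⟩ with hc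
  have hsub : Subtype.val '' C.supp ⊆ Subtype.val '' c.supp := by
    rintro z ⟨b, hb, rfl⟩
    have hreach : (T.induce A).Reachable x b :=
      ConnectedComponent.eq.mp (hx.trans ((ConnectedComponent.mem_supp_iff _ _).mp hb).symm)
    obtain ⟨p⟩ := hreach
    have hmem : ∀ z' ∈ p.support, (z' : V) ∈ ({v} : Set V)ᶜ := by
      intro z' hz'
      have hr : (T.induce A).Reachable x z' := (p.takeUntil z' hz').reachable
      have hz'C : z' ∈ C.supp := by
        rw [ConnectedComponent.mem_supp_iff, ← hx]
        exact (ConnectedComponent.eq.mpr hr).symm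
      exact Set.mem_compl_singleton_iff.mpr (hnov z' hz'C)
    have hr := aux_reachable_induce_of_walk T p hmem hxv
      (hmem b p.end_mem_support)
    refine ⟨⟨b.1, hmem b p.end_mem_support⟩, ?_, rfl⟩
    rw [ConnectedComponent.mem_supp_iff, hc]
    exact (ConnectedComponent.eq.mpr hr).symm
  have hCimg : (Subtype.val '' C.supp).ncard = Nat.card C.supp := by
    rw [Set.ncard_image_of_injective _ Subtype.val_injective, ← Nat.card_coe_set_eq]
  have hcimg : (Subtype.val '' c.supp).ncard = Nat.card c.supp := by
    rw [Set.ncard_image_of_injective _ Subtype.val_injective, ← Nat.card_coe_set_eq]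
  have hle : Nat.card C.supp ≤ Nat.card c.supp := by
    rw [← hCimg, ← hcimg]
    exact Set.ncard_le_ncard hsub (Set.toFinite _)
  have hc12 : c = c1 ∨ c = c2 := by
    by_contra hcon
    push_neg at hcon
    have := hrest c hcon.1 hcon.2
    omega
  have hcc : Nat.card c.supp = g + 1 := by
    rcases hc12 with rfl | rfl
    · exact h1
    · exact h2
  refine ⟨c, hc12, Set.eq_of_subset_of_ncard_le hsub ?_ (Set.toFinite _)⟩
  rw [hCimg, hcimg, hcc]
  omega

/-- If the image of a component `c` of `T - v` is contained in `A`, and some vertex of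
`c` lies in a component `C` of `T.induce A`, then `C` is at least as large as `c`. -/
lemma aux_revcapture [Fintype V] [DecidableEq V] (T : SimpleGraph V) {v : V} {A : Set V}
    (c : (T.induce (({v} : Set V)ᶜ)).ConnectedComponent)
    (hsub : ∀ b : ↥(({v} : Set V)ᶜ), b ∈ c.supp → (b : V) ∈ A)
    (C : (T.induce A).ConnectedComponent) (a : ↥(({v} : Set V)ᶜ))
    (ha : a ∈ c.supp) (haA : (a : V) ∈ A)
    (haC : (⟨a.1, haA⟩ : ↥A) ∈ C.supp) :
    Nat.card c.supp ≤ Nat.card C.supp := by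
  have key : ∀ b : ↥(({v} : Set V)ᶜ), b ∈ c.supp → ∀ (hbA : (b : V) ∈ A),
      (⟨b.1, hbA⟩ : ↥A) ∈ C.supp := by
    intro b hb hbA
    have hreach : (T.induce (({v} : Set V)ᶜ)).Reachable a b :=
      ConnectedComponent.eq.mp (((ConnectedComponent.mem_supp_iff _ _).mp ha).trans
        ((ConnectedComponent.mem_supp_iff _ _).mp hb).symm)
    obtain ⟨p⟩ := hreach
    have hmem : ∀ z ∈ p.support, (z : V) ∈ A := by
      intro z hz
      have hr : (T.induce (({v} : Set V)ᶜ)).Reachable a z := (p.takeUntil z hz).reachable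
      have hzc : z ∈ c.supp := by
        rw [ConnectedComponent.mem_supp_iff, ← (ConnectedComponent.mem_supp_iff _ _).mp ha]
        exact (ConnectedComponent.eq.mpr hr).symm
      exact hsub z hzc
    have hr := aux_reachable_induce_of_walk T p hmem haA hbA
    rw [ConnectedComponent.mem_supp_iff, ← (ConnectedComponent.mem_supp_iff _ _).mp haC]
    exact (ConnectedComponent.eq.mpr hr).symm
  have hinj : Function.Injective
      (fun b : ↥c.supp => (⟨⟨b.1.1, hsub b.1 b.2⟩, key b.1 b.2 (hsub b.1 b.2)⟩ : ↥C.supp)) := by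
    intro b b' h
    exact Subtype.ext (Subtype.ext (congrArg (fun t => t.1.1) h))
  exact Nat.card_le_card_of_injective _ hinj

end Aux

theorem extraConn_tree_star {V : Type*} [Fintype V] [DecidableEq V]
    (T : SimpleGraph V) (n g : ℕ) (hn : Fintype.card V = n)
    (hT : T.IsTree) (hg1 : 1 ≤ g) (hg2 : g ≤ (n - 3) / 2) (v : V)
    (c1 c2 : (T.induce (({v} : Set V)ᶜ)).ConnectedComponent) (hne : c1 ≠ c2)
    (h1 : Nat.card c1.supp = g + 1) (h2 : Nat.card c2.supp = g + 1)
    (hrest : ∀ c : (T.induce (({v} : Set V)ᶜ)).ConnectedComponent,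
      c ≠ c1 → c ≠ c2 → Nat.card c.supp ≤ g) :
    extraConn T g = n - 2 * g - 2 := by
  classical
  have hVcard : Nat.card V = n := by rw [Nat.card_eq_fintype_card, hn]
  set K1 : Set V := Subtype.val '' c1.supp with hK1def
  set K2 : Set V := Subtype.val '' c2.supp with hK2def
  have hK1 : K1.ncard = g + 1 := by
    rw [hK1def, Set.ncard_image_of_injective _ Subtype.val_injective,
      ← Nat.card_coe_set_eq, h1]
  have hK2 : K2.ncard = g + 1 := by
    rw [hK2def, Set.ncard_image_of_injective _ Subtype.val_injective,
      ← Nat.card_coe_set_eq, h2]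
  have hKv : ∀ z ∈ K1 ∪ K2, z ≠ v := by
    rintro z (⟨b, _, rfl⟩ | ⟨b, _, rfl⟩) <;>
      exact Set.mem_compl_singleton_iff.mp b.2
  have hKsub : K1 ∪ K2 ⊆ ({v} : Set V)ᶜ :=
    fun z hz => Set.mem_compl_singleton_iff.mpr (hKv z hz)
  have hdisj : Disjoint K1 K2 := by
    rw [Set.disjoint_left]
    rintro z ⟨a, ha, rfl⟩ ⟨b, hb, hba⟩
    have hab : b = a := Subtype.ext hba
    apply hne
    rw [← (ConnectedComponent.mem_supp_iff _ _).mp ha, ← hab,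
      (ConnectedComponent.mem_supp_iff _ _).mp hb]
  have hKcard : (K1 ∪ K2).ncard = 2 * g + 2 := by
    rw [Set.ncard_union_eq hdisj (Set.toFinite _) (Set.toFinite _), hK1, hK2]
    ring
  -- the witness cutset
  have hKfin : (K1 ∪ K2).Finite := Set.toFinite _
  set S₀ : Finset V := hKfin.toFinsetᶜ with hS₀def
  have hS₀ : ((S₀ : Set V))ᶜ = K1 ∪ K2 := by
    rw [hS₀def, Finset.coe_compl, Set.Finite.coe_toFinset, compl_compl]
  have hS₀card : S₀.card = n - 2 * g - 2 := by
    have h' : hKfin.toFinset.card = 2 * g + 2 := by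
      rw [← Set.ncard_eq_toFinset_card _ hKfin, hKcard]
    rw [hS₀def, Finset.card_compl, h', hn]
    omega
  have hcut₀ : IsRgCutset T g S₀ := by
    rw [IsRgCutset, hS₀]
    refine ⟨⟨v, ?_⟩, ?_, ?_⟩
    · rw [hS₀def, Finset.mem_compl, Set.Finite.mem_toFinset]
      exact fun h => hKv v h rfl
    · intro h
      obtain ⟨a1, ha1⟩ := c1.exists_rep
      obtain ⟨a2, ha2⟩ := c2.exists_rep
      have ha1K : (a1 : V) ∈ K1 ∪ K2 :=
        Or.inl ⟨a1, (ConnectedComponent.mem_supp_iff _ _).mpr ha1, rfl⟩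
      have ha2K : (a2 : V) ∈ K1 ∪ K2 :=
        Or.inr ⟨a2, (ConnectedComponent.mem_supp_iff _ _).mpr ha2, rfl⟩
      have hr := (h ⟨a1, ha1K⟩ ⟨a2, ha2K⟩).map (auxHomOfLe T hKsub)
      have hr' : (T.induce (({v} : Set V)ᶜ)).Reachable a1 a2 := by
        convert hr using 2 <;> exact Subtype.ext rfl
      exact hne (by rw [← ha1, ← ha2]; exact ConnectedComponent.eq.mpr hr')
    · intro C
      obtain ⟨z, hz⟩ := C.exists_rep
      have hzC : z ∈ C.supp := (ConnectedComponent.mem_supp_iff _ _).mpr hz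
      rcases z.2 with hz1 | hz2
      · obtain ⟨a, ha, haz⟩ := hz1
        have haK : (a : V) ∈ K1 ∪ K2 := Or.inl ⟨a, ha, rfl⟩
        have haC : (⟨(a : V), haK⟩ : ↥(K1 ∪ K2)) ∈ C.supp := by
          have : (⟨(a : V), haK⟩ : ↥(K1 ∪ K2)) = z := Subtype.ext haz
          rw [this]; exact hzC
        have := aux_revcapture T c1
          (fun b hb => Or.inl ⟨b, hb, rfl⟩) C a ha haK haC
        omega
      · obtain ⟨a, ha, haz⟩ := hz2
        have haK : (a : V) ∈ K1 ∪ K2 := Or.inr ⟨a, ha, rfl⟩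
        have haC : (⟨(a : V), haK⟩ : ↥(K1 ∪ K2)) ∈ C.supp := by
          have : (⟨(a : V), haK⟩ : ↥(K1 ∪ K2)) = z := Subtype.ext haz
          rw [this]; exact hzC
        have := aux_revcapture T c2
          (fun b hb => Or.inr ⟨b, hb, rfl⟩) C a ha haK haC
        omega
  -- every cutset has the same cardinality
  have huniq : ∀ S : Finset V, IsRgCutset T g S → S.card = n - 2 * g - 2 := by
    rintro S ⟨hSne, hSdisc, hSbig⟩
    set A : Set V := ((S : Set V))ᶜ with hAdef
    have hvS : v ∈ S := by
      by_contra hvS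
      have hvA : v ∈ A := by rw [hAdef]; simpa using hvS
      rw [Preconnected] at hSdisc
      push_neg at hSdisc
      obtain ⟨x, y, hxy⟩ := hSdisc
      obtain ⟨C, hC⟩ : ∃ C : (T.induce A).ConnectedComponent, (⟨v, hvA⟩ : ↥A) ∉ C.supp := by
        by_cases h : (⟨v, hvA⟩ : ↥A) ∈ ((T.induce A).connectedComponentMk x).supp
        · refine ⟨(T.induce A).connectedComponentMk y, fun h' => hxy ?_⟩
          exact ConnectedComponent.eq.mp
            (((ConnectedComponent.mem_supp_iff _ _).mp h).symm.trans
              ((ConnectedComponent.mem_supp_iff _ _).mp h'))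
        · exact ⟨_, h⟩
      have hnov : ∀ z : ↥A, z ∈ C.supp → (z : V) ≠ v := by
        intro z hzC hzv
        apply hC
        have : z = (⟨v, hvA⟩ : ↥A) := Subtype.ext hzv
        rwa [this] at hzC
      obtain ⟨c, hc12, himg⟩ := aux_capture T g v c1 c2 h1 h2 hrest C (hSbig C) hnov
      obtain ⟨x0, hx0⟩ := C.exists_rep
      have hx0C : x0 ∈ C.supp := (ConnectedComponent.mem_supp_iff _ _).mpr hx0
      have hx0img : (x0 : V) ∈ Subtype.val '' c.supp := himg ▸ ⟨x0, hx0C, rfl⟩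
      obtain ⟨a, hac, hax⟩ := hx0img
      obtain ⟨w, hw, hadj, hreach⟩ := aux_neighbor_in_comp T hT.isConnected v a
      have hwc : (⟨w, hw⟩ : ↥(({v} : Set V)ᶜ)) ∈ c.supp := by
        rw [ConnectedComponent.mem_supp_iff, ← (ConnectedComponent.mem_supp_iff _ _).mp hac]
        exact ConnectedComponent.eq.mpr hreach
      have hwC : w ∈ Subtype.val '' C.supp := by
        rw [himg]; exact ⟨⟨w, hw⟩, hwc, rfl⟩
      obtain ⟨w', hw'C, hw'w⟩ := hwC
      have hadj' : (T.induce A).Adj ⟨v, hvA⟩ w' := by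
        show T.Adj v w'.1
        rw [hw'w]; exact hadj
      have hvC : (⟨v, hvA⟩ : ↥A) ∈ C.supp := by
        rw [ConnectedComponent.mem_supp_iff, ← (ConnectedComponent.mem_supp_iff _ _).mp hw'C]
        exact ConnectedComponent.eq.mpr hadj'.reachable
      exact hnov _ hvC rfl
    -- now v ∈ S
    have hAsub : ∀ z : ↥A, (z : V) ≠ v := by
      intro z hzv
      have hzm : (z : V) ∉ (S : Set V) := z.2
      exact hzm (by rw [hzv]; exact_mod_cast hvS)
    have himgs : ∀ C : (T.induce A).ConnectedComponent,
        Subtype.val '' C.supp = K1 ∨ Subtype.val '' C.supp = K2 := by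
      intro C
      obtain ⟨c, hc12, himg⟩ := aux_capture T g v c1 c2 h1 h2 hrest C (hSbig C)
        (fun z _ => hAsub z)
      rcases hc12 with rfl | rfl
      · exact Or.inl himg
      · exact Or.inr himg
    have hA1 : A ⊆ K1 ∪ K2 := by
      intro z hz
      have hzmem : (⟨z, hz⟩ : ↥A) ∈ ((T.induce A).connectedComponentMk ⟨z, hz⟩).supp :=
        (ConnectedComponent.mem_supp_iff _ _).mpr rfl
      have : z ∈ Subtype.val '' ((T.induce A).connectedComponentMk ⟨z, hz⟩).supp :=
        ⟨⟨z, hz⟩, hzmem, rfl⟩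
      rcases himgs ((T.induce A).connectedComponentMk ⟨z, hz⟩) with h | h
      · rw [h] at this; exact Or.inl this
      · rw [h] at this; exact Or.inr this
    have hA2 : K1 ∪ K2 ⊆ A := by
      rw [Preconnected] at hSdisc
      push_neg at hSdisc
      obtain ⟨x, y, hxy⟩ := hSdisc
      set Cx := (T.induce A).connectedComponentMk x with hCx
      set Cy := (T.induce A).connectedComponentMk y with hCy
      have himgne : Subtype.val '' Cx.supp ≠ Subtype.val '' Cy.supp := by
        intro h
        have hx : (x : V) ∈ Subtype.val '' Cx.supp :=
          ⟨x, (ConnectedComponent.mem_supp_iff _ _).mpr rfl, rfl⟩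
        rw [h] at hx
        obtain ⟨b, hb, hbx⟩ := hx
        have : b = x := Subtype.ext hbx
        rw [this] at hb
        exact hxy (ConnectedComponent.eq.mp ((ConnectedComponent.mem_supp_iff _ _).mp hb))
      have hsuppA : ∀ (C : (T.induce A).ConnectedComponent), Subtype.val '' C.supp ⊆ A := by
        rintro C z ⟨b, _, rfl⟩; exact b.2
      rcases himgs Cx with hx1 | hx2 <;> rcases himgs Cy with hy1 | hy2
      · exact absurd (hx1.trans hy1.symm) himgne
      · exact Set.union_subset (hx1 ▸ hsuppA Cx) (hy2 ▸ hsuppA Cy)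
      · exact Set.union_subset (hy1 ▸ hsuppA Cy) (hx2 ▸ hsuppA Cx)
      · exact absurd (hx2.trans hy2.symm) himgne
    have hAK : A = K1 ∪ K2 := Set.Subset.antisymm hA1 hA2
    have hScoe : (S : Set V) = (K1 ∪ K2)ᶜ := by
      rw [← hAK, hAdef, compl_compl]
    have := Set.ncard_add_ncard_compl (K1 ∪ K2) (Set.toFinite _) (Set.toFinite _)
    rw [hVcard, hKcard] at this
    have hcard : S.card = (S : Set V).ncard := (Set.ncard_coe_finset S).symm
    rw [hcard, hScoe]
    omega
  -- conclude
  have hmem : (n - 2 * g - 2) ∈ {k | ∃ S : Finset V, S.card = k ∧ IsRgCutset T g S} :=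
    ⟨S₀, hS₀card, hcut₀⟩
  have hsinf := Nat.sInf_mem ⟨_, hmem⟩
  obtain ⟨S, hScard, hScut⟩ := hsinf
  rw [extraConn, ← hScard]
  exact huniq S hScut
end
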